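/- arXiv:1205.4567 — 6 statements merged into one kernel-verified Lean document; each statement's English description precedes it below -/
import Mathlib

section
/- Let ω = e^{2πi/3}. Every nonzero zero of the exponential polynomial Δ(ρ) = e^{iρ} + ω e^{iωρ} + ω² e^{iω²ρ} satisfies: ρ, ωρ, or ω²ρ lies on the positive imaginary axis; more precisely, the zeros on the positive imaginary axis form a sequence σ_k with -iσ_k = (2π/√3)(k + 1/6) + O(e^{-√3 π k}) as k → ∞. -/
/-!
Substituting `ωρ` for `ρ` multiplies `Δ` by `ω²`, so zeros come in orbits `{ρ, ωρ, ω²ρ}`, and for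
`ρ ≠ 0` one point of the orbit lies in the open upper half-plane. For `ρ = s + it` with `t > 0`,
multiply `Δ(ρ) = 0` by `e^{is/2 - t/2}`: the two rotated terms become `e^{-y} ζ̄` and `e^{y} ζ` with
`|ζ| = 1` and `y = √3 s / 2`. Eliminating `ζ` between this relation and its complex conjugate gives
`e^{3t} sinh²(2y) = sinh² y + sin²(√3 y)`, impossible for `y ≠ 0` because
`sin²(√3 y) ≤ 3y² ≤ 3 sinh² y` and `sinh²(2y) ≥ 4 sinh² y`. Hence `s = 0`.

On the imaginary axis `Δ(iu) = e^{u/2} (e^{-3u/2} + 2 sin(√3 u/2 - π/6))`. The sine vanishes at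
`u_k = (2π/√3)(k + 1/6)` and changes sign there; on `[u_k - δ, u_k + δ]` with `δ = 2 e^{-3u_k/2}`
it outgrows the exponential term at both ends, so the intermediate value theorem gives a zero
within `δ` of `u_k`.
-/

open Complex Filter Asymptotics
open scoped Real ComplexConjugate

noncomputable def delta (ω ρ : ℂ) : ℂ :=
  cexp (I * ρ) + ω * cexp (I * ω * ρ) + ω ^ 2 * cexp (I * ω ^ 2 * ρ)

theorem delta_mul {ω : ℂ} (hω : ω ^ 3 = 1) (ρ : ℂ) : delta ω (ω * ρ) = ω ^ 2 * delta ω ρ := by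
  have h : I * ω ^ 2 * (ω * ρ) = I * ρ := by linear_combination I * ρ * hω
  rw [delta, delta, h, show I * (ω * ρ) = I * ω * ρ by ring,
    show I * ω * (ω * ρ) = I * ω ^ 2 * ρ by ring]
  linear_combination (-cexp (I * ω * ρ) - ω * cexp (I * ω ^ 2 * ρ)) * hω

theorem delta_pow_mul {ω : ℂ} (hω : ω ^ 3 = 1) (j : ℕ) (ρ : ℂ) :
    delta ω (ω ^ j * ρ) = ω ^ (2 * j) * delta ω ρ := by
  induction j with
  | zero => simp
  | succ j ih => rw [pow_succ', mul_assoc, delta_mul hω, ih]; ring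

theorem cexp_two_pi_I_div_three : cexp (2 * π * I / 3) = -1 / 2 + √3 / 2 * I := by
  rw [show 2 * π * I / 3 = ((π - π / 3 : ℝ) : ℂ) * I by push_cast; ring, exp_mul_I,
    ← ofReal_cos, ← ofReal_sin, Real.cos_pi_sub, Real.sin_pi_sub, Real.cos_pi_div_three,
    Real.sin_pi_div_three]
  push_cast
  ring

theorem ofReal_sqrt_three_sq : (√3 : ℂ) ^ 2 = 3 := by
  exact_mod_cast Real.sq_sqrt (by norm_num : (0 : ℝ) ≤ 3)

section CubeRoot

variable {ω : ℂ}

theorem omega_sq (hω : ω = -1 / 2 + √3 / 2 * I) : ω ^ 2 = -1 / 2 - √3 / 2 * I := by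
  rw [hω]; linear_combination (I ^ 2 / 4) * ofReal_sqrt_three_sq + 3 / 4 * I_sq

theorem omega_pow_three (hω : ω = -1 / 2 + √3 / 2 * I) : ω ^ 3 = 1 := by
  rw [pow_succ, omega_sq hω, hω]
  linear_combination (-I ^ 2 / 4) * ofReal_sqrt_three_sq - 3 / 4 * I_sq

theorem conj_omega_sq (hω : ω = -1 / 2 + √3 / 2 * I) : conj (ω ^ 2) = ω := by
  rw [omega_sq hω, hω]
  simp only [map_sub, map_div₀, map_neg, map_one, map_mul, map_ofNat, conj_ofReal, conj_I]
  ring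

theorem norm_omega (hω : ω = -1 / 2 + √3 / 2 * I) : ‖ω‖ = 1 := by
  rw [hω, ← cexp_two_pi_I_div_three, show 2 * π * I / 3 = ((2 * π / 3 : ℝ) : ℂ) * I by
    push_cast; ring, norm_exp_ofReal_mul_I]

theorem one_add_omega_add_sq (hω : ω = -1 / 2 + √3 / 2 * I) : 1 + ω + ω ^ 2 = 0 := by
  rw [omega_sq hω, hω]; ring

end CubeRoot

theorem exists_im_pow_mul_pos {ω ρ : ℂ} (hω : 1 + ω + ω ^ 2 = 0) (hω_im : ω.im ≠ 0)
    (hρ : ρ ≠ 0) : ∃ j < 3, 0 < (ω ^ j * ρ).im := by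
  by_contra! h
  have hsum : ρ.im + (ω * ρ).im + (ω ^ 2 * ρ).im = 0 := by
    simpa only [add_mul, one_mul, add_im, zero_mul, zero_im] using congrArg (fun z => (z * ρ).im) hω
  have h0 := h 0 (by norm_num)
  have h1 := h 1 (by norm_num)
  have h2 := h 2 (by norm_num)
  rw [pow_zero, one_mul] at h0
  rw [pow_one] at h1
  have him : ρ.im = 0 := by linarith
  have hωρ : (ω * ρ).im = 0 := by linarith
  rw [mul_im, him, mul_zero, zero_add] at hωρ
  exact hρ (Complex.ext ((mul_eq_zero.1 hωρ).resolve_left hω_im) him)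

theorem sq_sub_sq_sq_eq_of_add_conj {E a b : ℝ} {u ζ : ℂ} (hu : ‖u‖ = 1) (hζ : ‖ζ‖ = 1)
    (h : E * u + a * conj ζ + b * ζ = 0) :
    (b ^ 2 - a ^ 2) ^ 2 = E ^ 2 * ((b - a) ^ 2 + 4 * a * b * u.im ^ 2) := by
  have hc : E * conj u + a * ζ + b * conj ζ = 0 := by
    simpa only [map_add, map_mul, conj_ofReal, conj_conj, map_zero] using congrArg conj h
  have key : ((b ^ 2 - a ^ 2 : ℝ) : ℂ) * ζ = -E * (b * u - a * conj u) := by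
    push_cast
    linear_combination b * h - a * hc
  have hnorm := congrArg (fun z => ‖z‖ ^ 2) key
  have hu2 : u.re ^ 2 + u.im ^ 2 = 1 := by
    have := Complex.sq_norm u
    rw [hu, normSq_apply] at this
    linear_combination -this
  simp only [norm_mul, hζ, mul_one, norm_real, Real.norm_eq_abs, sq_abs, mul_pow, norm_neg,
    Complex.sq_norm, normSq_apply] at hnorm
  rw [hnorm]
  simp only [sub_re, sub_im, mul_re, mul_im, ofReal_re, ofReal_im, conj_re, conj_im]
  linear_combination (E ^ 2 * (b - a) ^ 2) * hu2

theorem sinh_sq_add_sin_sq_lt {y t : ℝ} (hy : y ≠ 0) (ht : 0 < t) :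
    Real.sinh y ^ 2 + Real.sin (√3 * y) ^ 2 < Real.exp t * Real.sinh (2 * y) ^ 2 := by
  have h3 : √3 ^ 2 = 3 := Real.sq_sqrt (by norm_num)
  have hsinh : y ^ 2 ≤ Real.sinh y ^ 2 := by
    rw [← sq_abs y, ← sq_abs (Real.sinh y), Real.abs_sinh]
    exact pow_le_pow_left₀ (abs_nonneg y) (Real.self_le_sinh_iff.2 (abs_nonneg y)) 2
  have hsin : Real.sin (√3 * y) ^ 2 ≤ 3 * Real.sinh y ^ 2 := by
    calc Real.sin (√3 * y) ^ 2 ≤ (√3 * y) ^ 2 := Real.sin_sq_le_sq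
      _ = 3 * y ^ 2 := by rw [mul_pow, h3]
      _ ≤ 3 * Real.sinh y ^ 2 := by linarith
  have hsinh2 : 4 * Real.sinh y ^ 2 ≤ Real.sinh (2 * y) ^ 2 := by
    have hc : 1 ≤ Real.cosh y ^ 2 := one_le_pow₀ (Real.one_le_cosh y)
    rw [Real.sinh_two_mul]
    nlinarith [mul_le_mul_of_nonneg_left hc (sq_nonneg (Real.sinh y))]
  have hpos : 0 < Real.sinh y ^ 2 := by positivity
  have hexp : 1 < Real.exp t := Real.one_lt_exp_iff.2 ht
  nlinarith

theorem exp_mul_delta {ω : ℂ} (hω : ω = -1 / 2 + √3 / 2 * I) (s t : ℝ) :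
    cexp (I * s / 2 - t / 2) * delta ω (s + t * I) =
      (Real.exp (-(3 * t / 2)) : ℂ) * cexp ((3 * s / 2 : ℝ) * I)
      + (Real.exp (-(√3 * s / 2)) : ℂ) * conj (ω ^ 2 * cexp ((√3 * t / 2 : ℝ) * I))
      + (Real.exp (√3 * s / 2) : ℂ) * (ω ^ 2 * cexp ((√3 * t / 2 : ℝ) * I)) := by
  have e1 : cexp (I * s / 2 - t / 2) * cexp (I * (s + t * I))
      = (Real.exp (-(3 * t / 2)) : ℂ) * cexp ((3 * s / 2 : ℝ) * I) := by
    rw [ofReal_exp, ← exp_add, ← exp_add]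
    congr 1
    push_cast
    linear_combination (t : ℂ) * I_sq
  have e2 : cexp (I * s / 2 - t / 2) * cexp (I * ω * (s + t * I))
      = (Real.exp (-(√3 * s / 2)) : ℂ) * cexp ((√3 * t / 2 : ℝ) * -I) := by
    rw [ofReal_exp, ← exp_add, ← exp_add, hω]
    congr 1
    push_cast
    linear_combination ((-(t : ℂ) + √3 * s + √3 * t * I) / 2) * I_sq
  have e3 : cexp (I * s / 2 - t / 2) * cexp (I * ω ^ 2 * (s + t * I))
      = (Real.exp (√3 * s / 2) : ℂ) * cexp ((√3 * t / 2 : ℝ) * I) := by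
    rw [ofReal_exp, ← exp_add, ← exp_add, omega_sq hω]
    congr 1
    push_cast
    linear_combination ((-(t : ℂ) - √3 * s - √3 * t * I) / 2) * I_sq
  rw [map_mul, conj_omega_sq hω, ← exp_conj, map_mul, conj_ofReal, conj_I, delta]
  linear_combination e1 + ω * e2 + ω ^ 2 * e3

theorem re_eq_zero_of_delta_eq_zero {ω : ℂ} (hω : ω = -1 / 2 + √3 / 2 * I) {ρ : ℂ}
    (him : 0 < ρ.im) (h : delta ω ρ = 0) : ρ.re = 0 := by
  by_contra hre
  set s := ρ.re
  set t := ρ.im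
  set y := √3 * s / 2 with hy_def
  have hy : y ≠ 0 := by positivity
  have hζ : ‖ω ^ 2 * cexp ((√3 * t / 2 : ℝ) * I)‖ = 1 := by
    rw [norm_mul, norm_pow, norm_omega hω, norm_exp_ofReal_mul_I, one_pow, one_mul]
  have heq := sq_sub_sq_sq_eq_of_add_conj (norm_exp_ofReal_mul_I _) hζ
    ((exp_mul_delta hω s t).symm.trans (by rw [re_add_im, h, mul_zero]))
  have hsub : Real.exp y - Real.exp (-y) = 2 * Real.sinh y := by rw [Real.sinh_eq]; ring
  have hsq : Real.exp y ^ 2 - Real.exp (-y) ^ 2 = 2 * Real.sinh (2 * y) := by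
    rw [Real.sinh_eq, ← Real.exp_nat_mul, ← Real.exp_nat_mul]; push_cast; ring_nf
  have hprod : Real.exp (-y) * Real.exp y = 1 := by
    rw [← Real.exp_add, neg_add_cancel, Real.exp_zero]
  have hE : Real.exp (-(3 * t / 2)) ^ 2 * Real.exp (3 * t) = 1 := by
    rw [← Real.exp_nat_mul, ← Real.exp_add]; push_cast; ring_nf; exact Real.exp_zero
  have hφ : 3 * s / 2 = √3 * y := by
    rw [hy_def]; linear_combination (-s / 2) * Real.mul_self_sqrt (by norm_num : (0 : ℝ) ≤ 3)
  rw [← hy_def, hsub, hsq, mul_assoc 4, hprod, exp_ofReal_mul_I_im, hφ] at heq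
  have hlt := sinh_sq_add_sin_sq_lt hy (by positivity : 0 < 3 * t)
  have : Real.exp (3 * t) * Real.sinh (2 * y) ^ 2 = Real.sinh y ^ 2 + Real.sin (√3 * y) ^ 2 := by
    linear_combination (Real.exp (3 * t) / 4) * heq
      + (Real.sinh y ^ 2 + Real.sin (√3 * y) ^ 2) * hE
  linarith

noncomputable def axisProfile (u : ℝ) : ℝ :=
  Real.exp (-(3 * u / 2)) + 2 * Real.sin (√3 * u / 2 - π / 6)

theorem delta_I_mul_ofReal {ω : ℂ} (hω : ω = -1 / 2 + √3 / 2 * I) (u : ℝ) :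
    delta ω (I * u) = (Real.exp (u / 2) * axisProfile u : ℝ) := by
  have hexp : Real.exp (u / 2) * Real.exp (-(3 * u / 2)) = Real.exp (-u) := by
    rw [← Real.exp_add]; ring_nf
  rw [delta, omega_sq hω, hω, axisProfile, mul_add (Real.exp (u / 2)), hexp, Real.sin_sub,
    Real.sin_pi_div_six, Real.cos_pi_div_six, Complex.ext_iff, ofReal_re, ofReal_im]
  constructor <;>
  simp only [add_re, add_im, sub_re, sub_im, mul_re, mul_im, exp_re, exp_im, I_re, I_im,
    ofReal_re, ofReal_im, div_ofNat_re, div_ofNat_im, neg_re, neg_im, one_re, one_im, zero_mul,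
    mul_zero, sub_self, one_mul, zero_add, zero_sub, add_zero, neg_zero, neg_mul, mul_neg,
    sub_zero, zero_div, mul_one, sub_neg_eq_add, one_div, Real.cos_zero, Real.sin_zero,
    Real.cos_neg, Real.sin_neg] <;> ring_nf

theorem continuous_axisProfile : Continuous axisProfile := by
  unfold axisProfile; fun_prop

noncomputable def approxZero (k : ℕ) : ℝ := 2 * π / √3 * (k + 1 / 6)

theorem axisProfile_approxZero_add (k : ℕ) (d : ℝ) :
    axisProfile (approxZero k + d) =
      Real.exp (-(3 * (approxZero k + d) / 2)) + (-1) ^ k * (2 * Real.sin (√3 * d / 2)) := by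
  have hang : √3 * (approxZero k + d) / 2 - π / 6 = √3 * d / 2 + k * π := by
    have : √3 ≠ 0 := by positivity
    rw [approxZero]; field_simp; ring
  rw [axisProfile, hang, Real.sin_add_nat_mul_pi]; ring

theorem three_mul_approxZero_div_two (k : ℕ) : 3 * approxZero k / 2 = √3 * π * (k + 1 / 6) := by
  rw [approxZero, show 3 * (2 * π / √3 * (k + 1 / 6)) / 2 = 3 / √3 * π * (k + 1 / 6) by ring,
    Real.div_sqrt]

theorem seven_halves_le_approxZero {k : ℕ} (hk : 1 ≤ k) : 7 / 2 ≤ approxZero k := by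
  have hk' : (1 : ℝ) ≤ k := by exact_mod_cast hk
  have h3 : √3 * √3 = 3 := Real.mul_self_sqrt (by norm_num)
  have hs : 0 < √3 := by positivity
  have hc : 3 ≤ 2 * π / √3 := by
    rw [le_div_iff₀ hs]; nlinarith [Real.pi_gt_three]
  rw [approxZero]; nlinarith

theorem exp_neg_lt_two_sin {v d : ℝ} (hv : 7 / 2 ≤ v) (hd : |d| ≤ 2 * Real.exp (-(3 * v / 2))) :
    Real.exp (-(3 * (v + d) / 2)) < 2 * Real.sin (√3 * (2 * Real.exp (-(3 * v / 2))) / 2) := by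
  set ε := Real.exp (-(3 * v / 2)) with hε_def
  have hε0 : 0 < ε := Real.exp_pos _
  have hε : ε < 1 / 6 := by
    rw [hε_def, Real.exp_neg, inv_lt_comm₀ (Real.exp_pos _) (by norm_num)]
    linarith [Real.add_one_le_exp (3 * v / 2)]
  have h3ε : Real.exp (3 * ε) < 2 := by
    refine (Real.exp_bound_div_one_sub_of_interval' (by positivity) (by linarith)).trans_le ?_
    rw [div_le_iff₀ (by linarith)]; linarith
  have h3 : √3 * √3 = 3 := Real.mul_self_sqrt (by norm_num)
  have hs : 0 < √3 := by positivity
  have hs17 : 1.7 ≤ √3 := by nlinarith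
  have hs2 : √3 ≤ 2 := by nlinarith
  have hjordan : 2 / π * (√3 * ε) ≤ Real.sin (√3 * ε) :=
    Real.mul_le_sin (by positivity) (by nlinarith [Real.pi_gt_three])
  have hsin : 2 * ε ≤ 2 * Real.sin (√3 * (2 * ε) / 2) := by
    rw [show √3 * (2 * ε) / 2 = √3 * ε by ring]
    have hπ : 1 ≤ 2 / π * √3 := by
      rw [div_mul_eq_mul_div, le_div_iff₀ Real.pi_pos]; linarith [Real.pi_lt_d2]
    nlinarith
  calc Real.exp (-(3 * (v + d) / 2)) ≤ Real.exp (-(3 * v / 2) + 3 * ε) := by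
        gcongr; linarith [neg_abs_le d]
    _ = ε * Real.exp (3 * ε) := Real.exp_add _ _
    _ < ε * 2 := by gcongr
    _ ≤ 2 * Real.sin (√3 * (2 * ε) / 2) := by linarith

theorem exists_axisProfile_eq_zero_near {k : ℕ} (hk : 1 ≤ k) :
    ∃ x, axisProfile x = 0 ∧ 0 < x ∧
      |x - approxZero k| ≤ 2 * Real.exp (-(3 * approxZero k / 2)) := by
  have hv := seven_halves_le_approxZero hk
  have hδ : 0 < 2 * Real.exp (-(3 * approxZero k / 2)) := by positivity
  have hright := exp_neg_lt_two_sin hv (abs_of_pos hδ).le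
  have hleft := exp_neg_lt_two_sin hv (by rw [abs_neg, abs_of_pos hδ])
  have hplus := axisProfile_approxZero_add k (2 * Real.exp (-(3 * approxZero k / 2)))
  have hminus := axisProfile_approxZero_add k (-(2 * Real.exp (-(3 * approxZero k / 2))))
  set v := approxZero k
  set δ := 2 * Real.exp (-(3 * v / 2)) with hδ_def
  rw [← sub_eq_add_neg] at hleft hminus
  rw [mul_neg, neg_div, Real.sin_neg] at hminus
  have hδ2 : δ ≤ 2 := by
    rw [hδ_def]; linarith [Real.exp_le_one_iff.2 (by linarith : -(3 * v / 2) ≤ 0)]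
  have hzero : (0 : ℝ) ∈ Set.uIcc (axisProfile (v - δ)) (axisProfile (v + δ)) := by
    rw [Set.mem_uIcc]
    have hpos_right := Real.exp_pos (-(3 * (v + δ) / 2))
    have hpos_left := Real.exp_pos (-(3 * (v - δ) / 2))
    rcases neg_one_pow_eq_or ℝ k with hsign | hsign <;> rw [hsign] at hplus hminus
    · left; constructor <;> linarith
    · right; constructor <;> linarith
  obtain ⟨x, hx, hx0⟩ := intermediate_value_uIcc continuous_axisProfile.continuousOn hzero
  rw [Set.uIcc_of_le (by linarith)] at hx
  exact ⟨x, hx0, by linarith [hx.1], abs_sub_le_iff.2 ⟨by linarith [hx.2], by linarith [hx.1]⟩⟩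

theorem stmt0 (ω : ℂ) (hω : ω = Complex.exp (2 * π * Complex.I / 3))
    (Δ : ℂ → ℂ)
    (hΔ : ∀ ρ, Δ ρ = Complex.exp (Complex.I * ρ) + ω * Complex.exp (Complex.I * ω * ρ)
      + ω ^ 2 * Complex.exp (Complex.I * ω ^ 2 * ρ)) :
    (∀ ρ : ℂ, ρ ≠ 0 → Δ ρ = 0 →
      ∃ j < 3, (ω ^ j * ρ).re = 0 ∧ 0 < (ω ^ j * ρ).im) ∧
    ∃ σ : ℕ → ℂ, (∀ k, Δ (σ k) = 0 ∧ (σ k).re = 0 ∧ 0 < (σ k).im) ∧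
      (fun k : ℕ => (-Complex.I * σ k)
          - (((2 * π / Real.sqrt 3) * ((k : ℝ) + 1 / 6) : ℝ) : ℂ))
        =O[atTop] fun k : ℕ => Real.exp (-(Real.sqrt 3) * π * (k : ℝ)) := by
  have hω' : ω = -1 / 2 + √3 / 2 * I := hω.trans cexp_two_pi_I_div_three
  obtain rfl : Δ = delta ω := funext hΔ
  refine ⟨fun ρ hρ hzero => ?_, ?_⟩
  · obtain ⟨j, hj, him⟩ := exists_im_pow_mul_pos (one_add_omega_add_sq hω') (by simp [hω']) hρ
    refine ⟨j, hj, re_eq_zero_of_delta_eq_zero hω' him ?_, him⟩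
    rw [delta_pow_mul (omega_pow_three hω'), hzero, mul_zero]
  -- `k = 0` borrows the zero near `approxZero 1`; only the tail matters for the `O`-bound.
  choose x hx using fun k => exists_axisProfile_eq_zero_near (le_max_right k 1)
  refine ⟨fun k => I * x k, fun k => ⟨?_, by simp, by simpa using (hx k).2.1⟩, ?_⟩
  · rw [delta_I_mul_ofReal hω', (hx k).1, mul_zero, ofReal_zero]
  refine IsBigO.of_bound 2 ((eventually_ge_atTop 1).mono fun k hk => ?_)
  have hbound := (hx k).2.2
  rw [max_eq_left hk] at hbound
  rw [neg_mul, ← mul_assoc, I_mul_I, neg_one_mul, neg_neg, ← ofReal_sub, norm_real,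
    Real.norm_eq_abs, Real.norm_of_nonneg (Real.exp_pos _).le]
  calc |x k - approxZero k| ≤ 2 * Real.exp (-(3 * approxZero k / 2)) := hbound
    _ ≤ 2 * Real.exp (-√3 * π * k) := by
        rw [three_mul_approxZero_div_two]; gcongr; nlinarith [Real.pi_pos, Real.sqrt_nonneg 3]
end

section
/- If -iσ is purely imaginary with σ on the positive imaginary axis and e^{iσ} + ω e^{iωσ} + ω² e^{iω²σ} = 0 (ω = e^{2πi/3}), then the function φ(x) = Σ_{r=0}^{2} e^{iω^r σ x}(e^{iω^{r+2}σ} - e^{iω^{r+1}σ}) satisfies the ODE -iφ''' = σ³ φ on [0,1] (i.e., (-i d/dx)³ φ = σ³ φ) together with the boundary conditions φ(0) = 0, φ(1) = 0, and φ'(0) = 0. -/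
open scoped Real
open Complex Finset

/-
Each exponential `x ↦ exp (i ω^r σ x)` is an eigenfunction of `(-i d/dx)³` with eigenvalue
`(ω^r σ)³ = σ³`, since `ω³ = 1`; hence so is `φ`. Writing `E r = exp (i ω^r σ)`, which is
3-periodic in `r`, the boundary values are cyclic sums: `φ(0) = Σ (E (r+2) - E (r+1))` telescopes,
`φ(1) = Σ E r (E (r+2) - E (r+1))` cancels in pairs, and `φ'(0)` is `iσ (ω - ω²)` times
`E 0 + ω E 1 + ω² E 2 = 0`.
-/

theorem hasDerivAt_cexp_mul_ofReal (c : ℂ) (x : ℝ) :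
    HasDerivAt (fun t : ℝ => exp (c * t)) (exp (c * x) * c) x := by
  simpa using (((hasDerivAt_id (x : ℂ)).const_mul c).cexp).comp_ofReal

theorem iteratedDeriv_sum_cexp_mul {ι : Type*} (s : Finset ι) (c k : ι → ℂ) (n : ℕ) :
    iteratedDeriv n (fun t : ℝ => ∑ r ∈ s, exp (c r * t) * k r)
      = fun t : ℝ => ∑ r ∈ s, exp (c r * t) * (c r ^ n * k r) := by
  induction n with
  | zero => simp
  | succ n ih =>
    rw [iteratedDeriv_succ, ih]
    funext t
    refine (HasDerivAt.fun_sum fun r _ =>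
      (hasDerivAt_cexp_mul_ofReal (c r) t).mul_const (c r ^ n * k r)).deriv.trans ?_
    exact sum_congr rfl fun r _ => by ring

theorem neg_I_pow_three_mul_eq_of_pow_three_eq_one {ω : ℂ} (hω3 : ω ^ 3 = 1) (σ : ℂ) (r : ℕ) :
    (-I) ^ 3 * (I * ω ^ r * σ) ^ 3 = σ ^ 3 := by
  calc (-I) ^ 3 * (I * ω ^ r * σ) ^ 3 = (-(I * I)) ^ 3 * (ω ^ 3) ^ r * σ ^ 3 := by ring
    _ = σ ^ 3 := by simp [hω3]

theorem stmt1_general (ω σ : ℂ) (hω : ω = Complex.exp (2 * π * Complex.I / 3))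
    (hzero : Complex.exp (Complex.I * σ) + ω * Complex.exp (Complex.I * ω * σ)
      + ω ^ 2 * Complex.exp (Complex.I * ω ^ 2 * σ) = 0)
    (φ : ℝ → ℂ)
    (hφ : ∀ x : ℝ, φ x = ∑ r ∈ Finset.range 3,
      Complex.exp (Complex.I * ω ^ r * σ * x) *
        (Complex.exp (Complex.I * ω ^ (r + 2) * σ) - Complex.exp (Complex.I * ω ^ (r + 1) * σ))) :
    (∀ x ∈ Set.Icc (0:ℝ) 1, (-Complex.I) ^ 3 * iteratedDeriv 3 φ x = σ ^ 3 * φ x) ∧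
    φ 0 = 0 ∧ φ 1 = 0 ∧ deriv φ 0 = 0 := by
  have hω3 : ω ^ 3 = 1 := hω ▸ by simpa using (isPrimitiveRoot_exp 3 three_ne_zero).pow_eq_one
  have hω4 : ω ^ 4 = ω := by rw [pow_succ, hω3, one_mul]
  have hD (n : ℕ) (x : ℝ) := congrFun (funext hφ ▸ iteratedDeriv_sum_cexp_mul (range 3)
    (fun r => I * ω ^ r * σ) (fun r => exp (I * ω ^ (r + 2) * σ) - exp (I * ω ^ (r + 1) * σ)) n) x
  refine ⟨fun x _ => ?_, ?_, ?_, ?_⟩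
  · rw [hD, hφ, mul_sum, mul_sum]
    refine sum_congr rfl fun r _ => ?_
    linear_combination exp (I * ω ^ r * σ * x) * (exp (I * ω ^ (r + 2) * σ) -
      exp (I * ω ^ (r + 1) * σ)) * neg_I_pow_three_mul_eq_of_pow_three_eq_one hω3 σ r
  · simp only [hφ, sum_range_succ, range_one, sum_singleton, Nat.reduceAdd, pow_one, hω3, hω4,
      mul_one, ofReal_zero, mul_zero, exp_zero, one_mul]
    ring
  · simp only [hφ, sum_range_succ, range_one, sum_singleton, Nat.reduceAdd, pow_zero, pow_one, hω3,
      hω4, mul_one, ofReal_one]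
    ring
  · simp only [← iteratedDeriv_one, hD, sum_range_succ, range_one, sum_singleton, Nat.reduceAdd,
      pow_zero, pow_one, hω3, hω4, mul_one, ofReal_zero, mul_zero, exp_zero, one_mul]
    linear_combination I * σ * (ω - ω ^ 2) * hzero
      + I * σ * (exp (I * ω * σ) + (ω - 1) * exp (I * ω ^ 2 * σ)) * hω3

theorem stmt1 (ω σ : ℂ) (hω : ω = Complex.exp (2 * π * Complex.I / 3))
    (hσre : σ.re = 0) (hσim : 0 < σ.im)
    (hzero : Complex.exp (Complex.I * σ) + ω * Complex.exp (Complex.I * ω * σ)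
      + ω ^ 2 * Complex.exp (Complex.I * ω ^ 2 * σ) = 0)
    (φ : ℝ → ℂ)
    (hφ : ∀ x : ℝ, φ x = ∑ r ∈ Finset.range 3,
      Complex.exp (Complex.I * ω ^ r * σ * x) *
        (Complex.exp (Complex.I * ω ^ (r + 2) * σ) - Complex.exp (Complex.I * ω ^ (r + 1) * σ))) :
    (∀ x ∈ Set.Icc (0:ℝ) 1, (-Complex.I) ^ 3 * iteratedDeriv 3 φ x = σ ^ 3 * φ x) ∧
    φ 0 = 0 ∧ φ 1 = 0 ∧ deriv φ 0 = 0 :=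
  stmt1_general ω σ hω hzero φ hφ
end

section
/- With notation as above, the L² norms of the eigenfunctions satisfy ‖ψ_k‖² = ‖φ_k‖² = (3√3 e^{(4π/√3)(k + 1/6)})/(4π(k + 1/6)) + O(e^{(2π/√3)k}/k) as k → ∞. -/
/-!
Put `t = -iσ_k`, which is real. With `f_z(x) = ∑_r e^{ω^r z x} (e^{ω^{r+2} z} - e^{ω^{r+1} z})`
we have `ψ_k = f_t` and `φ_k = f_{-t}`. Since `1 + ω + ω² = 0`, `f_{-z}(1 - x) = -f_z(x)`, so
`‖φ_k‖ = ‖ψ_k‖`; and since `conj ω = ω²`, `f_t` is purely imaginary, so `‖f_t‖² = -∫₀¹ f_t²`.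

Writing `f_t = ∑ᵢ aᵢ e^{bᵢ x}` with `bᵢ = ωⁱ t`, the integral is `A·MA - a·Ma`, where
`M_{ij} = (bᵢ + bⱼ)⁻¹` and `Aᵢ = aᵢ e^{bᵢ}`. Every `Aᵢ` is `O(e^{t/2})`, and
`a = e^t (0, 1, -1) + O(e^{-t/2})` with `(0, 1, -1)·M(0, 1, -1) = 3 / (2t)`, so
`t ‖f_t‖² = (3/2) e^{2t} + O(e^t)`. Replacing `t_k` by `(2π/√3)(k + 1/6)` changes
`e^{2t}/t` by `O(e^{4πk/√3 - √3πk}/k)`, which is at most of order `e^{2πk/√3}/k`.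
-/

open Filter Asymptotics Topology Complex Matrix ComplexConjugate
open scoped Real

namespace IsPrimitiveRoot

variable {ω : ℂ}

theorem one_add_add_sq_eq_zero (hω : IsPrimitiveRoot ω 3) : 1 + ω + ω ^ 2 = 0 := by
  simpa [Finset.sum_range_succ] using hω.geom_sum_eq_zero (by norm_num)

theorem conj_eq_sq_of_three (hω : IsPrimitiveRoot ω 3) : conj ω = ω ^ 2 := by
  rw [← inv_eq_conj (hω.norm'_eq_one (by norm_num))]
  exact inv_eq_of_mul_eq_one_right (by rw [← pow_succ']; exact hω.pow_eq_one)

theorem re_eq_neg_half_of_three (hω : IsPrimitiveRoot ω 3) : ω.re = -1 / 2 := by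
  have h := congrArg re (add_conj ω)
  rw [hω.conj_eq_sq_of_three,
    show ω + ω ^ 2 = -1 by linear_combination hω.one_add_add_sq_eq_zero] at h
  simp at h
  linarith

theorem sq_re_eq_neg_half_of_three (hω : IsPrimitiveRoot ω 3) : (ω ^ 2).re = -1 / 2 := by
  rw [← hω.conj_eq_sq_of_three, conj_re, hω.re_eq_neg_half_of_three]

end IsPrimitiveRoot

theorem Matrix.norm_dotProduct_mulVec_le {ι R : Type*} [Fintype ι] [SeminormedRing R]
    (D : Matrix ι ι R) (hD : ∀ i j, ‖D i j‖ ≤ 1) (x y : ι → R) :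
    ‖x ⬝ᵥ D *ᵥ y‖ ≤ (∑ i, ‖x i‖) * ∑ j, ‖y j‖ := by
  rw [Finset.sum_mul_sum]
  refine (norm_sum_le _ _).trans (Finset.sum_le_sum fun i _ => ?_)
  refine (norm_mul_le _ _).trans ?_
  rw [← Finset.mul_sum]
  refine mul_le_mul_of_nonneg_left
    ((norm_sum_le _ _).trans (Finset.sum_le_sum fun j _ => ?_)) (norm_nonneg _)
  exact (norm_mul_le _ _).trans (mul_le_of_le_one_left (norm_nonneg _) (hD i j))

theorem Matrix.smul_add_dotProduct_mulVec_smul_add {ι R : Type*} [Fintype ι] [CommRing R]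
    (D : Matrix ι ι R) (c : R) (u v : ι → R) :
    (c • u + v) ⬝ᵥ D *ᵥ (c • u + v) =
      c ^ 2 * (u ⬝ᵥ D *ᵥ u) + c * (u ⬝ᵥ D *ᵥ v + v ⬝ᵥ D *ᵥ u) + v ⬝ᵥ D *ᵥ v := by
  simp only [mulVec_add, mulVec_smul, add_dotProduct, dotProduct_add, smul_dotProduct,
    dotProduct_smul, smul_eq_mul]
  ring

theorem intervalIntegral.integral_sq_sum_exp {ι : Type*} [Fintype ι] (a b : ι → ℂ)
    (D : Matrix ι ι ℂ) (hD : ∀ i j, (b i + b j) * D i j = 1) :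
    ∫ x in (0:ℝ)..1, (∑ i, a i * cexp (b i * x)) ^ 2 =
      (fun i => a i * cexp (b i)) ⬝ᵥ D *ᵥ (fun i => a i * cexp (b i)) - a ⬝ᵥ D *ᵥ a := by
  have hsq (x : ℝ) : (∑ i, a i * cexp (b i * x)) ^ 2 =
      ∑ i, ∑ j, a i * a j * cexp ((b i + b j) * x) := by
    simp only [sq, Finset.sum_mul_sum, add_mul, Complex.exp_add]
    exact Finset.sum_congr rfl fun i _ => Finset.sum_congr rfl fun j _ => by ring
  have hexp (i j) : ∫ x in (0:ℝ)..1, cexp ((b i + b j) * x) =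
      D i j * (cexp (b i) * cexp (b j) - 1) := by
    rw [integral_exp_mul_complex (left_ne_zero_of_mul_eq_one (hD i j)), ← Complex.exp_add,
      div_eq_inv_mul, inv_eq_of_mul_eq_one_right (hD i j)]
    simp
  simp only [hsq, dotProduct, mulVec, Finset.mul_sum, ← Finset.sum_sub_distrib]
  rw [intervalIntegral.integral_finsetSum fun i _ =>
    (by fun_prop : Continuous _).intervalIntegrable _ _]
  refine Finset.sum_congr rfl fun i _ => ?_
  rw [intervalIntegral.integral_finsetSum fun j _ =>
    (by fun_prop : Continuous _).intervalIntegrable _ _]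
  refine Finset.sum_congr rfl fun j _ => ?_
  rw [intervalIntegral.integral_const_mul, hexp]
  ring

/-- `φ_k = cubicMode ω (iσ_k)` and `ψ_k = cubicMode ω (-iσ_k)`. -/
noncomputable def cubicMode (ω z : ℂ) (x : ℝ) : ℂ :=
  ∑ r ∈ Finset.range 3,
    cexp (ω ^ r * z * x) * (cexp (ω ^ (r + 2) * z) - cexp (ω ^ (r + 1) * z))

section

variable {ω : ℂ}

theorem cubicMode_eq_sum_fin (z : ℂ) (x : ℝ) :
    cubicMode ω z x = ∑ i : Fin 3, (cexp (ω ^ ((i : ℕ) + 2) * z) - cexp (ω ^ ((i : ℕ) + 1) * z)) *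
      cexp (ω ^ (i : ℕ) * z * x) := by
  rw [cubicMode, Finset.sum_range]
  exact Finset.sum_congr rfl fun i _ => mul_comm _ _

theorem cubicMode_eq (hω : ω ^ 3 = 1) (z : ℂ) (x : ℝ) :
    cubicMode ω z x = (cexp (ω ^ 2 * z) - cexp (ω * z)) * cexp (z * x) +
      (cexp z - cexp (ω ^ 2 * z)) * cexp (ω * z * x) +
      (cexp (ω * z) - cexp z) * cexp (ω ^ 2 * z * x) := by
  have hω4 : ω ^ 4 = ω := by linear_combination ω * hω
  simp only [cubicMode, Finset.sum_range_succ, Finset.range_zero, Finset.sum_empty]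
  norm_num [hω, hω4]
  ring

theorem cubicMode_neg_one_sub (hω : IsPrimitiveRoot ω 3) (z : ℂ) (x : ℝ) :
    cubicMode ω (-z) (1 - x) = -cubicMode ω z x := by
  have hs := hω.one_add_add_sq_eq_zero
  have hexp (c : ℂ) : cexp (-(c * (1 - x))) = cexp (-c) * cexp (c * x) := by
    rw [← Complex.exp_add]; ring_nf
  have h0 : cexp (-(ω * z)) * cexp (-(ω ^ 2 * z)) = cexp z := by
    rw [← Complex.exp_add]; congr 1; linear_combination -z * hs
  have h1 : cexp (-z) * cexp (-(ω ^ 2 * z)) = cexp (ω * z) := by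
    rw [← Complex.exp_add]; congr 1; linear_combination -z * hs
  have h2 : cexp (-z) * cexp (-(ω * z)) = cexp (ω ^ 2 * z) := by
    rw [← Complex.exp_add]; congr 1; linear_combination -z * hs
  simp only [cubicMode_eq hω.pow_eq_one, ofReal_sub, ofReal_one, mul_neg, neg_mul, hexp]
  linear_combination cexp (z * x) * (h1 - h2) + cexp (ω * z * x) * (h2 - h0) +
    cexp (ω ^ 2 * z * x) * (h0 - h1)

theorem conj_cubicMode (hω : IsPrimitiveRoot ω 3) (t x : ℝ) :
    conj (cubicMode ω t x) = -cubicMode ω t x := by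
  have hω4 : (ω ^ 2) ^ 2 = ω := by linear_combination ω * hω.pow_eq_one
  simp only [cubicMode_eq hω.pow_eq_one, map_add, map_sub, map_mul, ← Complex.exp_conj, map_pow,
    hω.conj_eq_sq_of_three, conj_ofReal, hω4]
  ring

theorem ofReal_integral_norm_sq_cubicMode (hω : IsPrimitiveRoot ω 3) (t : ℝ) :
    ((∫ x in (0:ℝ)..1, ‖cubicMode ω t x‖ ^ 2 : ℝ) : ℂ) =
      -∫ x in (0:ℝ)..1, cubicMode ω t x ^ 2 := by
  rw [← intervalIntegral.integral_ofReal, ← intervalIntegral.integral_neg]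
  refine intervalIntegral.integral_congr fun x _ => ?_
  rw [ofReal_pow, ← mul_conj', conj_cubicMode hω]
  ring

theorem integral_norm_sq_cubicMode_neg (hω : IsPrimitiveRoot ω 3) (z : ℂ) :
    ∫ x in (0:ℝ)..1, ‖cubicMode ω (-z) x‖ ^ 2 = ∫ x in (0:ℝ)..1, ‖cubicMode ω z x‖ ^ 2 := by
  have h := intervalIntegral.integral_comp_sub_left (fun x => ‖cubicMode ω (-z) x‖ ^ 2)
    (a := 0) (b := 1) 1
  simp only [cubicMode_neg_one_sub hω, norm_neg, sub_zero, sub_self] at h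
  exact h.symm

noncomputable def cubeRootPairInv (ω : ℂ) : Matrix (Fin 3) (Fin 3) ℂ :=
  !![1 / 2, -ω, -ω ^ 2; -ω, ω ^ 2 / 2, -1; -ω ^ 2, -1, ω / 2]

theorem pow_add_pow_mul_cubeRootPairInv (hω : IsPrimitiveRoot ω 3) (i j : Fin 3) :
    (ω ^ (i : ℕ) + ω ^ (j : ℕ)) * cubeRootPairInv ω i j = 1 := by
  have h3 := hω.pow_eq_one
  have hs := hω.one_add_add_sq_eq_zero
  fin_cases i <;> fin_cases j <;> simp [cubeRootPairInv] <;> grind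

theorem norm_cubeRootPairInv_le (hω : IsPrimitiveRoot ω 3) (i j : Fin 3) :
    ‖cubeRootPairInv ω i j‖ ≤ 1 := by
  have h1 := hω.norm'_eq_one (by norm_num)
  fin_cases i <;> fin_cases j <;> norm_num [cubeRootPairInv, h1]

theorem dotProduct_cubeRootPairInv_mulVec_self (hω : IsPrimitiveRoot ω 3) :
    ![0, 1, -1] ⬝ᵥ cubeRootPairInv ω *ᵥ ![0, 1, -1] = 3 / 2 := by
  simp [dotProduct, mulVec, Fin.sum_univ_three, cubeRootPairInv]
  linear_combination (1 / 2 : ℂ) * hω.one_add_add_sq_eq_zero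

theorem mul_integral_cubicMode_sq (hω : IsPrimitiveRoot ω 3) {t : ℝ} (ht : t ≠ 0) {E p q : ℂ}
    (hE : cexp t = E) (hp : cexp (ω * t) = p) (hq : cexp (ω ^ 2 * t) = q) :
    t * ∫ x in (0:ℝ)..1, cubicMode ω t x ^ 2 =
      ![(q - p) * E, (E - q) * p, (p - E) * q] ⬝ᵥ cubeRootPairInv ω *ᵥ
        ![(q - p) * E, (E - q) * p, (p - E) * q] -
      (E • ![0, 1, -1] + ![q - p, -q, p]) ⬝ᵥ cubeRootPairInv ω *ᵥ
        (E • ![0, 1, -1] + ![q - p, -q, p]) := by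
  subst hE hp hq
  have ht0 : (t : ℂ) ≠ 0 := ofReal_ne_zero.mpr ht
  have h3 := hω.pow_eq_one
  have h4 : ω ^ 4 = ω := by linear_combination ω * h3
  have hcoeff : (fun i : Fin 3 => cexp (ω ^ ((i : ℕ) + 2) * t) - cexp (ω ^ ((i : ℕ) + 1) * t)) =
      cexp t • ![0, 1, -1] +
        ![cexp (ω ^ 2 * t) - cexp (ω * t), -cexp (ω ^ 2 * t), cexp (ω * t)] := by
    funext i; fin_cases i <;> simp [h3, h4] <;> ring
  have hvals : (fun i : Fin 3 => (cexp (ω ^ ((i : ℕ) + 2) * t) - cexp (ω ^ ((i : ℕ) + 1) * t)) *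
      cexp (ω ^ (i : ℕ) * t)) = ![(cexp (ω ^ 2 * t) - cexp (ω * t)) * cexp t,
        (cexp t - cexp (ω ^ 2 * t)) * cexp (ω * t),
        (cexp (ω * t) - cexp t) * cexp (ω ^ 2 * t)] := by
    funext i; fin_cases i <;> simp [h3, h4]
  simp_rw [cubicMode_eq_sum_fin]
  rw [intervalIntegral.integral_sq_sum_exp _ _ ((t : ℂ)⁻¹ • cubeRootPairInv ω), hvals, hcoeff]
  · simp only [smul_mulVec, dotProduct_smul, smul_eq_mul]
    field_simp
  · intro i j
    rw [Matrix.smul_apply, smul_eq_mul, ← add_mul]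
    field_simp
    exact pow_add_pow_mul_cubeRootPairInv hω i j

/-- With `E = e^t`, `p = e^{ωt}`, `q = e^{ω²t}`, `s = e^{t/2}` and `M = cubeRootPairInv ω`, the
expression bounded here is `t ∫₀¹ (cubicMode ω t)² + (3/2) e^{2t}`. -/
theorem norm_cubicMode_remainder_le {s : ℝ} (hs : 1 ≤ s) {E p q : ℂ} (hE : ‖E‖ = s ^ 2)
    (hp : ‖p‖ = s⁻¹) (hq : ‖q‖ = s⁻¹) (M : Matrix (Fin 3) (Fin 3) ℂ)
    (hM : ∀ i j, ‖M i j‖ ≤ 1) :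
    ‖![(q - p) * E, (E - q) * p, (p - E) * q] ⬝ᵥ M *ᵥ
          ![(q - p) * E, (E - q) * p, (p - E) * q] -
        E * (![0, 1, -1] ⬝ᵥ M *ᵥ ![q - p, -q, p] + ![q - p, -q, p] ⬝ᵥ M *ᵥ ![0, 1, -1]) -
        ![q - p, -q, p] ⬝ᵥ M *ᵥ ![q - p, -q, p]‖ ≤ 68 * s ^ 2 := by
  have hr : s⁻¹ ≤ 1 := inv_le_one_of_one_le₀ hs
  have hrs : s⁻¹ * s = 1 := inv_mul_cancel₀ (by positivity)
  have hA : ∑ i, ‖![(q - p) * E, (E - q) * p, (p - E) * q] i‖ ≤ 6 * s := by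
    simp only [Fin.sum_univ_three, cons_val_zero, cons_val_one, cons_val_two, head_cons,
      tail_cons, norm_mul]
    calc ‖q - p‖ * ‖E‖ + ‖E - q‖ * ‖p‖ + ‖p - E‖ * ‖q‖
        ≤ (‖q‖ + ‖p‖) * ‖E‖ + (‖E‖ + ‖q‖) * ‖p‖ + (‖p‖ + ‖E‖) * ‖q‖ := by
          gcongr <;> apply norm_sub_le
      _ ≤ 6 * s := by rw [hE, hp, hq]; nlinarith
  have hu : ∑ i, ‖(![0, 1, -1] : Fin 3 → ℂ) i‖ = 2 := by
    simp [Fin.sum_univ_three, cons_val_two]; norm_num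
  have hv : ∑ i, ‖![q - p, -q, p] i‖ ≤ 4 * s⁻¹ := by
    simp only [Fin.sum_univ_three, cons_val_zero, cons_val_one, cons_val_two, head_cons,
      tail_cons, norm_neg]
    linarith [norm_sub_le q p]
  have hbound := norm_dotProduct_mulVec_le M hM
  calc _ ≤ ‖_ ⬝ᵥ M *ᵥ _‖ + ‖E‖ * (‖_ ⬝ᵥ M *ᵥ _‖ + ‖_ ⬝ᵥ M *ᵥ _‖) + ‖_ ⬝ᵥ M *ᵥ _‖ := by
        refine (norm_sub_le _ _).trans (add_le_add_left ((norm_sub_le _ _).trans ?_) _)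
        rw [norm_mul]
        gcongr
        exact norm_add_le _ _
    _ ≤ 6 * s * (6 * s) + s ^ 2 * (2 * (4 * s⁻¹) + 4 * s⁻¹ * 2) + 4 * s⁻¹ * (4 * s⁻¹) := by
        rw [hE]
        gcongr
        · exact (hbound _ _).trans (mul_le_mul hA hA (by positivity) (by positivity))
        · exact (hbound _ _).trans (by rw [hu]; exact mul_le_mul_of_nonneg_left hv zero_le_two)
        · exact (hbound _ _).trans (by rw [hu]; exact mul_le_mul_of_nonneg_right hv zero_le_two)
        · exact (hbound _ _).trans (mul_le_mul hv hv (by positivity) (by positivity))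
    _ ≤ 68 * s ^ 2 := by nlinarith

theorem norm_mul_integral_cubicMode_sq_add_le (hω : IsPrimitiveRoot ω 3) {t : ℝ} (ht : 0 < t) :
    ‖t * (∫ x in (0:ℝ)..1, cubicMode ω t x ^ 2) + 3 / 2 * cexp (2 * t)‖ ≤ 68 * Real.exp t := by
  set E := cexp t with hE
  have hE2 : cexp (2 * t) = E ^ 2 := by rw [← Complex.exp_nat_mul]; norm_num
  have hs : Real.exp t = Real.exp (t / 2) ^ 2 := by rw [← Real.exp_nat_mul]; ring_nf
  have hnorm (c : ℂ) (hc : c.re = -1 / 2) : ‖cexp (c * t)‖ = (Real.exp (t / 2))⁻¹ := by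
    rw [norm_exp, ← Real.exp_neg, re_mul_ofReal, hc]; ring_nf
  rw [mul_integral_cubicMode_sq hω ht.ne' hE.symm rfl rfl, smul_add_dotProduct_mulVec_smul_add,
    dotProduct_cubeRootPairInv_mulVec_self hω, hE2, hs]
  convert norm_cubicMode_remainder_le (E := E) (Real.one_le_exp (by positivity))
    (by rw [← hs, norm_exp_ofReal])
    (hnorm ω hω.re_eq_neg_half_of_three) (hnorm _ hω.sq_re_eq_neg_half_of_three) _
    (norm_cubeRootPairInv_le hω) using 2
  ring

theorem abs_mul_integral_norm_sq_cubicMode_sub_le (hω : IsPrimitiveRoot ω 3) {s : ℝ}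
    (hs : 0 < s) :
    |s * (∫ x in (0:ℝ)..1, ‖cubicMode ω s x‖ ^ 2) - 3 / 2 * Real.exp (2 * s)| ≤
      68 * Real.exp s := by
  refine le_of_eq_of_le ?_ (norm_mul_integral_cubicMode_sq_add_le hω hs)
  rw [← norm_neg, ← Real.norm_eq_abs, ← norm_real]
  push_cast
  rw [ofReal_integral_norm_sq_cubicMode hω]
  ring_nf

end

theorem abs_exp_two_mul_div_sub_le {t T : ℝ} (hT : 1 ≤ T) (ht : 0 < t) (h : |t - T| ≤ 1 / 2) :
    |Real.exp (2 * t) / t - Real.exp (2 * T) / T| ≤ 5 * Real.exp (2 * T) * |t - T| / t := by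
  have hT0 : 0 < T := by linarith
  have hsplit : Real.exp (2 * t) / t - Real.exp (2 * T) / T =
      Real.exp (2 * T) * ((Real.exp (2 * (t - T)) - 1) / t + (T - t) / (t * T)) := by
    rw [show 2 * t = 2 * (t - T) + 2 * T by ring, Real.exp_add]
    field_simp
    ring
  have hexp : |Real.exp (2 * (t - T)) - 1| ≤ 4 * |t - T| := by
    have := Real.abs_exp_sub_one_le (x := 2 * (t - T)) (by rw [abs_mul, abs_two]; linarith)
    rw [abs_mul, abs_two] at this; linarith
  rw [hsplit, abs_mul, abs_of_pos (Real.exp_pos _), mul_assoc, mul_comm 5, mul_assoc,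
    mul_div_assoc]
  refine mul_le_mul_of_nonneg_left ?_ (Real.exp_pos _).le
  calc |(Real.exp (2 * (t - T)) - 1) / t + (T - t) / (t * T)|
      ≤ 4 * |t - T| / t + |t - T| / (t * 1) := by
        refine (abs_add_le _ _).trans (add_le_add ?_ ?_)
        · rw [abs_div, abs_of_pos ht]; gcongr
        · rw [abs_div, abs_sub_comm, abs_of_pos (mul_pos ht hT0)]; gcongr
    _ = |t - T| * 5 / t := by ring

theorem half_le_of_abs_sub_le {c a k s : ℝ} (hc : 1 ≤ c) (ha : 0 ≤ a) (hk : 1 ≤ k)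
    (h : |s - c * (k + a)| ≤ 1 / 2) : k / 2 ≤ s := by
  nlinarith [(abs_le.mp h).1]

section
variable {c a δ : ℝ} {t : ℕ → ℝ}

theorem eventually_abs_sub_le_half (hδ : 0 < δ)
    (ht : (fun k : ℕ => t k - c * (k + a)) =O[atTop] fun k : ℕ => Real.exp (-δ * k)) :
    ∀ᶠ k : ℕ in atTop, |t k - c * (k + a)| ≤ 1 / 2 := by
  have hdecay : Tendsto (fun k : ℕ => Real.exp (-δ * k)) atTop (𝓝 0) :=
    Real.tendsto_exp_comp_nhds_zero.mpr
      (tendsto_natCast_atTop_atTop.const_mul_atTop_of_neg (neg_neg_of_pos hδ))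
  exact (ht.trans_tendsto hdecay).abs.eventually_le_const (by norm_num)

theorem isBigO_exp_div (hc : 1 ≤ c) (ha : 0 ≤ a) (hδ : 0 < δ)
    (ht : (fun k : ℕ => t k - c * (k + a)) =O[atTop] fun k : ℕ => Real.exp (-δ * k)) :
    (fun k => Real.exp (t k) / t k) =O[atTop] fun k : ℕ => Real.exp (c * k) / k := by
  refine IsBigO.of_bound (2 * Real.exp (c * a + 1 / 2)) ?_
  filter_upwards [eventually_abs_sub_le_half hδ ht, eventually_ge_atTop 1] with k hε hk
  have hk1 : (1 : ℝ) ≤ k := by exact_mod_cast hk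
  have hkt := half_le_of_abs_sub_le hc ha hk1 hε
  rw [Real.norm_of_nonneg (div_nonneg (Real.exp_pos _).le (by linarith)),
    Real.norm_of_nonneg (by positivity)]
  calc Real.exp (t k) / t k ≤ Real.exp (c * k + (c * a + 1 / 2)) / (k / 2) := by
        gcongr
        linarith [(abs_le.mp hε).2]
    _ = 2 * Real.exp (c * a + 1 / 2) * (Real.exp (c * k) / k) := by
        rw [Real.exp_add]; field_simp

theorem isBigO_exp_two_mul_div_sub (hc : 1 ≤ c) (ha : 0 ≤ a) (hcδ : c ≤ δ)
    (ht : (fun k : ℕ => t k - c * (k + a)) =O[atTop] fun k : ℕ => Real.exp (-δ * k)) :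
    (fun k => Real.exp (2 * t k) / t k - Real.exp (2 * (c * (k + a))) / (c * (k + a)))
      =O[atTop] fun k : ℕ => Real.exp (c * k) / k := by
  obtain ⟨C, hC0, hC⟩ := ht.exists_pos
  refine IsBigO.of_bound (10 * C * Real.exp (2 * c * a)) ?_
  filter_upwards [hC.bound, eventually_abs_sub_le_half (by linarith) ht, eventually_ge_atTop 1]
    with k hCk hε hk
  have hk1 : (1 : ℝ) ≤ k := by exact_mod_cast hk
  have hkt := half_le_of_abs_sub_le hc ha hk1 hε
  rw [Real.norm_eq_abs, Real.norm_eq_abs, abs_of_pos (Real.exp_pos _)] at hCk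
  rw [Real.norm_eq_abs, Real.norm_of_nonneg (by positivity)]
  calc _ ≤ 5 * Real.exp (2 * (c * (k + a))) * |t k - c * (k + a)| / t k :=
        abs_exp_two_mul_div_sub_le (by nlinarith) (by linarith) hε
    _ ≤ 5 * Real.exp (2 * c * a + 2 * c * k) * (C * Real.exp (-δ * k)) / (k / 2) := by
        gcongr
        · exact le_of_eq (by ring_nf)
    _ = 10 * C * Real.exp (2 * c * a) * (Real.exp (2 * c * k + -δ * k) / k) := by
        rw [Real.exp_add, Real.exp_add]; field_simp; norm_num
    _ ≤ 10 * C * Real.exp (2 * c * a) * (Real.exp (c * k) / k) := by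
        gcongr
        nlinarith

end

theorem isBigO_sub_exp_two_mul_div {N : ℝ → ℝ} {K c a δ : ℝ} {t : ℕ → ℝ}
    (hN : ∀ s > 0, |s * N s - 3 / 2 * Real.exp (2 * s)| ≤ K * Real.exp s)
    (hc : 1 ≤ c) (ha : 0 ≤ a) (hcδ : c ≤ δ)
    (ht : (fun k : ℕ => t k - c * (k + a)) =O[atTop] fun k : ℕ => Real.exp (-δ * k)) :
    (fun k => N (t k) - 3 / 2 * Real.exp (2 * (c * (k + a))) / (c * (k + a)))
      =O[atTop] fun k : ℕ => Real.exp (c * k) / k := by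
  have hδ : 0 < δ := by linarith
  have hNdiv :
      (fun s => N s - 3 / 2 * Real.exp (2 * s) / s) =O[atTop] fun s => Real.exp s / s := by
    refine IsBigO.of_bound K ?_
    filter_upwards [eventually_gt_atTop 0] with s hs
    rw [Real.norm_eq_abs, Real.norm_of_nonneg (by positivity), mul_div_assoc',
      show N s - 3 / 2 * Real.exp (2 * s) / s = (s * N s - 3 / 2 * Real.exp (2 * s)) / s by
        field_simp, abs_div, abs_of_pos hs]
    gcongr
    exact hN s hs
  have htend : Tendsto t atTop atTop := by
    refine tendsto_atTop_mono' _ ?_ (tendsto_natCast_atTop_atTop.atTop_div_const two_pos)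
    filter_upwards [eventually_abs_sub_le_half hδ ht, eventually_ge_atTop 1] with k hε hk
    exact half_le_of_abs_sub_le hc ha (by exact_mod_cast hk) hε
  have hsum := ((hNdiv.comp_tendsto htend).trans (isBigO_exp_div hc ha hδ ht)).add
    ((isBigO_exp_two_mul_div_sub hc ha hcδ ht).const_mul_left (3 / 2))
  refine hsum.congr_left fun k => ?_
  simp only [Function.comp_apply]
  ring

theorem one_le_two_mul_pi_div_sqrt_three : 1 ≤ 2 * π / Real.sqrt 3 := by
  have hs3 : Real.sqrt 3 ^ 2 = 3 := Real.sq_sqrt (by norm_num)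
  rw [le_div_iff₀ (by positivity)]
  nlinarith [Real.pi_gt_three]

theorem two_mul_pi_div_sqrt_three_le : 2 * π / Real.sqrt 3 ≤ Real.sqrt 3 * π := by
  have hs3 : Real.sqrt 3 ^ 2 = 3 := Real.sq_sqrt (by norm_num)
  rw [div_le_iff₀ (by positivity)]
  nlinarith [Real.pi_pos]

theorem stmt4 (ω : ℂ) (hω : ω = Complex.exp (2 * π * Complex.I / 3))
    (σ : ℕ → ℂ) (hσ : ∀ k, (σ k).re = 0 ∧ 0 < (σ k).im)
    (hasymp : (fun k : ℕ => (-Complex.I * σ k)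
        - (((2 * π / Real.sqrt 3) * ((k : ℝ) + 1 / 6) : ℝ) : ℂ))
      =O[atTop] fun k : ℕ => Real.exp (-(Real.sqrt 3) * π * (k : ℝ)))
    (φ ψ : ℕ → ℝ → ℂ)
    (hφ : ∀ k (x : ℝ), φ k x = ∑ r ∈ Finset.range 3,
      Complex.exp (Complex.I * ω ^ r * σ k * x) *
        (Complex.exp (Complex.I * ω ^ (r + 2) * σ k) - Complex.exp (Complex.I * ω ^ (r + 1) * σ k)))
    (hψ : ∀ k (x : ℝ), ψ k x = ∑ r ∈ Finset.range 3,
      Complex.exp (-Complex.I * ω ^ r * σ k * x) *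
        (Complex.exp (-Complex.I * ω ^ (r + 2) * σ k) - Complex.exp (-Complex.I * ω ^ (r + 1) * σ k))) :
    (∀ k, (∫ x in (0:ℝ)..1, ‖ψ k x‖ ^ 2) = ∫ x in (0:ℝ)..1, ‖φ k x‖ ^ 2) ∧
    (fun k : ℕ => (∫ x in (0:ℝ)..1, ‖φ k x‖ ^ 2)
        - 3 * Real.sqrt 3 * Real.exp ((4 * π / Real.sqrt 3) * ((k : ℝ) + 1 / 6))
          / (4 * π * ((k : ℝ) + 1 / 6)))
      =O[atTop] fun k : ℕ => Real.exp ((2 * π / Real.sqrt 3) * (k : ℝ)) / (k : ℝ) := by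
  have hω3 : IsPrimitiveRoot ω 3 := by
    rw [hω]; exact_mod_cast Complex.isPrimitiveRoot_exp 3 (by norm_num)
  set t : ℕ → ℝ := fun k => (σ k).im
  have hσt (k : ℕ) : σ k = t k * I := by
    apply Complex.ext <;> simp [t, (hσ k).1]
  have hψt (k : ℕ) : ψ k = cubicMode ω (t k) := by
    funext x; rw [hψ, cubicMode, hσt]; congr! 3 <;> ring_nf <;> simp
  have hφt (k : ℕ) : φ k = cubicMode ω (-(t k : ℂ)) := by
    funext x; rw [hφ, cubicMode, hσt]; congr! 3 <;> ring_nf <;> simp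
  have hsym (k : ℕ) : (∫ x in (0:ℝ)..1, ‖ψ k x‖ ^ 2) = ∫ x in (0:ℝ)..1, ‖φ k x‖ ^ 2 := by
    rw [hψt, hφt, integral_norm_sq_cubicMode_neg hω3]
  refine ⟨hsym, ?_⟩
  have ht : (fun k : ℕ => t k - 2 * π / Real.sqrt 3 * (k + 1 / 6))
      =O[atTop] fun k : ℕ => Real.exp (-(Real.sqrt 3 * π) * k) := by
    refine IsBigO.of_norm_left (hasymp.norm_left.congr (fun k => ?_) (fun k => ?_))
    · rw [hσt, ← norm_real]; push_cast; ring_nf; simp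
    · ring_nf
  simp_rw [← hsym, hψt]
  refine (isBigO_sub_exp_two_mul_div (fun s hs => abs_mul_integral_norm_sq_cubicMode_sub_le hω3 hs)
    one_le_two_mul_pi_div_sqrt_three (by norm_num) two_mul_pi_div_sqrt_three_le
    ht).congr_left fun k => ?_
  have hs3 : Real.sqrt 3 ^ 2 = 3 := Real.sq_sqrt (by norm_num)
  congr 1
  field_simp
  ring_nf
end

section
/- Let ω = e^{2πi/3} and β ∈ (-1,0). The purely imaginary-shifted zeros of Δ^β(ρ) = iρ(ω-ω²)[Σ_{r=0}^{2}ω^r e^{iω^r ρ} - β Σ_{r=0}^{2}ω^r e^{-iω^r ρ}] admit the asymptotic description: there is a sequence of zeros σ_k with σ_k = (k - 1/3)π + i log(-β) + O(e^{-√3 kπ/2}) for k even and σ_k = (-k - 2/3)π + i log(-β) + O(e^{-√3 kπ/2}) for k odd, as k → ∞. -/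
open Filter Asymptotics
open scoped Real

/-!
Write `Δ^β(ρ) = iρ(ω - ω²) F(ρ)`. Where `Re ρ → +∞` with `Im ρ` bounded, the two terms
`ω² e^{iω²ρ}` and `-βω e^{-iωρ}` of `F` dominate all others by a factor `e^{√3 Re ρ / 2}`, and they
cancel exactly when `ω e^{-iρ} = β`, i.e. at `t_m = (2m - 1/3)π + i log(-β)`. Dividing by
`βω e^{-iωρ}`, the equation `F(t_m + iw) = 0` becomes `e^w = 1 + ψ(w)`, where `ψ` is a sum of four
exponentials which, with its derivative, is `O(e^{-√3 mπ})` on `|w| ≤ 1/2`; so `w ↦ log(1 + ψ(w))`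
is a contraction of that disc, and its fixed point gives a zero within `O(e^{-√3 mπ})` of `t_m`.
Since `F(-ρ̄) = conj F(ρ)`, reflecting these zeros gives the zeros of odd index.
-/

open Complex Metric Set Finset
open scoped NNReal ComplexConjugate Topology

lemma norm_inv_le_two_of_mem_closedBall_one {x : ℂ} (hx : x ∈ closedBall (1 : ℂ) (1 / 2)) :
    ‖x⁻¹‖ ≤ 2 := by
  rw [mem_closedBall_iff_norm] at hx
  have : (1 : ℝ) / 2 ≤ ‖x‖ := by
    have := norm_sub_norm_le (1 : ℂ) (1 - x)
    rw [sub_sub_cancel, norm_one, norm_sub_rev] at this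
    linarith
  rw [norm_inv]
  exact inv_le_of_inv_le₀ (by norm_num) (by linarith)

lemma lipschitzOnWith_log_closedBall_one : LipschitzOnWith 2 log (closedBall (1 : ℂ) (1 / 2)) := by
  refine (convex_closedBall _ _).lipschitzOnWith_of_nnnorm_hasDerivWithin_le
    (fun x hx => (hasDerivAt_log ?_).hasDerivWithinAt) fun x hx => ?_
  · have := mem_slitPlane_of_norm_lt_one (z := x - 1)
      (by rw [← dist_eq_norm]; linarith [mem_closedBall.1 hx])
    rwa [add_sub_cancel] at this
  · rw [← NNReal.coe_le_coe, coe_nnnorm]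
    exact norm_inv_le_two_of_mem_closedBall_one hx

lemma exists_exp_eq_one_add {φ : ℂ → ℂ} {ε : ℝ} {K : ℝ≥0} (hε : ε ≤ 1 / 3) (hK : 2 * K < 1)
    (hφ : ∀ w ∈ closedBall (0 : ℂ) (1 / 2), ‖φ w‖ ≤ ε)
    (hφK : LipschitzOnWith K φ (closedBall 0 (1 / 2))) :
    ∃ w, ‖w‖ ≤ 3 / 2 * ε ∧ exp w = 1 + φ w := by
  set B := closedBall (0 : ℂ) (1 / 2)
  have h1φ : ∀ w ∈ B, 1 + φ w ∈ closedBall (1 : ℂ) (1 / 2) := fun w hw => by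
    rw [mem_closedBall_iff_norm, add_sub_cancel_left]
    linarith [hφ w hw]
  have hlog : ∀ w ∈ B, ‖log (1 + φ w)‖ ≤ 3 / 2 * ε := fun w hw =>
    (norm_log_one_add_half_le_self (by linarith [hφ w hw])).trans (by gcongr; exact hφ w hw)
  have hmaps : MapsTo (fun w => log (1 + φ w)) B B := fun w hw => by
    rw [mem_closedBall_zero_iff]; linarith [hlog w hw]
  have hlip : LipschitzOnWith (2 * K) (fun w => log (1 + φ w)) B := by
    refine LipschitzOnWith.of_dist_le_mul fun x hx y hy => ?_
    calc dist (log (1 + φ x)) (log (1 + φ y))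
        ≤ 2 * dist (1 + φ x) (1 + φ y) :=
          lipschitzOnWith_log_closedBall_one.dist_le_mul _ (h1φ x hx) _ (h1φ y hy)
      _ = 2 * dist (φ x) (φ y) := by rw [dist_add_left]
      _ ≤ 2 * (K * dist x y) := by gcongr; exact hφK.dist_le_mul _ hx _ hy
      _ = _ := by push_cast; ring
  obtain ⟨w, hw, hfix, -⟩ := ContractingWith.exists_fixedPoint' isClosed_closedBall.isComplete
    hmaps ⟨hK, hmaps.lipschitzOnWith_iff_restrict.1 hlip⟩ (mem_closedBall_self (by norm_num))
    (edist_ne_top _ _)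
  have hne : 1 + φ w ≠ 0 := fun h => by
    have := mem_closedBall_iff_norm.1 (h1φ w hw)
    rw [h, zero_sub, norm_neg, norm_one] at this
    norm_num at this
  refine ⟨w, hfix ▸ hlog w hw, ?_⟩
  rw [← exp_log hne]
  exact congrArg exp hfix.eq.symm

section ExpSum

variable {ι : Type*} (s : Finset ι) {a ν : ι → ℂ}

lemma norm_sum_mul_exp_le {δ R r : ℝ} (ha : ∀ j ∈ s, ‖a j‖ ≤ δ) (hν : ∀ j ∈ s, ‖ν j‖ ≤ R)
    {w : ℂ} (hw : ‖w‖ ≤ r) : ‖∑ j ∈ s, a j * exp (ν j * w)‖ ≤ #s * (δ * Real.exp (R * r)) := by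
  refine (norm_sum_le _ _).trans ?_
  rw [← nsmul_eq_mul]
  refine sum_le_card_nsmul _ _ _ fun j hj => ?_
  rw [norm_mul]
  gcongr
  · exact (norm_nonneg _).trans (ha j hj)
  · exact ha j hj
  · refine (norm_exp_le_exp_norm _).trans (Real.exp_le_exp.2 ?_)
    rw [norm_mul]
    exact mul_le_mul (hν j hj) hw (norm_nonneg _) ((norm_nonneg _).trans (hν j hj))

lemma exists_exp_eq_one_add_sum_mul_exp {δ : ℝ} (ha : ∀ j ∈ s, ‖a j‖ ≤ δ)
    (hν : ∀ j ∈ s, ‖ν j‖ ≤ 2) (hδ : 8 * (#s * δ * Real.exp 1) ≤ 1) :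
    ∃ w, ‖w‖ ≤ 3 / 2 * (#s * δ * Real.exp 1) ∧ exp w = 1 + ∑ j ∈ s, a j * exp (ν j * w) := by
  have hR : (2 : ℝ) * (1 / 2) = 1 := by norm_num
  have hderiv : ∀ w, HasDerivAt (fun w => ∑ j ∈ s, a j * exp (ν j * w))
      (∑ j ∈ s, (a j * ν j) * exp (ν j * w)) w := fun w =>
    HasDerivAt.fun_sum fun j _ => by
      simpa [mul_comm, mul_left_comm, mul_assoc] using
        ((hasDerivAt_mul_const (ν j)).cexp).const_mul (a j)
  refine exists_exp_eq_one_add (K := 1 / 4) (by linarith) (by norm_num) (fun w hw => ?_) ?_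
  · have := norm_sum_mul_exp_le s ha hν (mem_closedBall_zero_iff.1 hw)
    rw [hR] at this
    linarith
  · refine (convex_closedBall _ _).lipschitzOnWith_of_nnnorm_hasDerivWithin_le
      (fun w _ => (hderiv w).hasDerivWithinAt) fun w hw => ?_
    rw [← NNReal.coe_le_coe, coe_nnnorm]
    have := norm_sum_mul_exp_le s (a := fun j => a j * ν j) (δ := 2 * δ) (fun j hj => ?_) hν
      (mem_closedBall_zero_iff.1 hw)
    · rw [hR] at this
      push_cast
      linarith
    · rw [norm_mul, mul_comm]
      exact mul_le_mul (hν j hj) (ha j hj) (norm_nonneg _) zero_le_two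

end ExpSum

noncomputable def cubicExpSum (β μ ρ : ℂ) : ℂ :=
  (∑ r ∈ range 3, μ ^ r * exp (I * μ ^ r * ρ)) - β * ∑ r ∈ range 3, μ ^ r * exp (-I * μ ^ r * ρ)

lemma cubicExpSum_neg_conj (β : ℝ) {μ : ℂ} (hμ : conj μ = μ ^ 2) (hμ3 : μ ^ 3 = 1) (ρ : ℂ) :
    cubicExpSum β μ (-conj ρ) = conj (cubicExpSum β μ ρ) := by
  have h4 : (μ ^ 2) ^ 2 = μ := by linear_combination μ * hμ3
  simp only [cubicExpSum, sum_range_succ, sum_range_zero, map_sub, map_add, map_mul, map_pow,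
    ← exp_conj, conj_I, hμ, conj_ofReal, map_neg, h4, mul_neg, neg_mul, neg_neg, pow_zero, pow_one,
    one_mul, mul_one, zero_add]
  ring

/-- Divided by the dominant term `-βμ e^{-Iμρ}`, the four terms of `cubicExpSum β μ ρ` outside the
dominant pair become multiples of `e^{Iνρ}` with `ν = remainderFreq μ j`; at `ρ = t + I w` they are
`remainderCoeff β μ t j * e^{-ν w}`. -/
def remainderFreq (μ : ℂ) : Fin 4 → ℂ := ![-μ ^ 2, μ - 1, 2 * μ, μ - μ ^ 2]

noncomputable def remainderCoeff (β μ t : ℂ) (j : Fin 4) : ℂ :=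
  -(β * μ)⁻¹ * ![1, -β, μ, -β * μ ^ 2] j * exp (I * remainderFreq μ j * t)

lemma cubicExpSum_eq_zero_of_exp_eq {β μ t w : ℂ} (hμ : 1 + μ + μ ^ 2 = 0)
    (ht : μ * exp (-(I * t)) = β) (hβ : β ≠ 0)
    (hw : exp w = 1 + ∑ j, remainderCoeff β μ t j * exp (-remainderFreq μ j * w)) :
    cubicExpSum β μ (t + I * w) = 0 := by
  set ρ := t + I * w
  have hμ0 : μ ≠ 0 := by rintro rfl; norm_num at hμ
  have hshift : ∀ ν,
      exp (-I * μ * ρ) * (exp (I * ν * t) * exp (-ν * w)) = exp (I * (ν - μ) * ρ) := by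
    intro ν
    rw [← exp_add, ← exp_add]
    congr 1
    linear_combination (-ν * w) * I_sq
  have hdom : β * exp (-I * μ * ρ) * exp w = μ * exp (I * μ ^ 2 * ρ) := by
    rw [← ht, mul_assoc μ, mul_assoc μ, ← exp_add, ← exp_add]
    congr 2
    linear_combination (-I * ρ) * hμ + w * I_sq
  have e0 : I * (-μ ^ 2 - μ) * ρ = I * ρ := by linear_combination (-I * ρ) * hμ
  have e1 : I * (μ - 1 - μ) * ρ = -I * ρ := by ring
  have e2 : I * (2 * μ - μ) * ρ = I * μ * ρ := by ring
  have e3 : I * (μ - μ ^ 2 - μ) * ρ = -I * μ ^ 2 * ρ := by ring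
  simp only [Fin.sum_univ_four, remainderCoeff, remainderFreq, Matrix.cons_val_zero,
    Matrix.cons_val_one, Matrix.cons_val_two, Matrix.cons_val_three, Matrix.tail_cons,
    Matrix.head_cons] at hw
  have hw' : β * μ * (exp w - 1) = -(exp (I * -μ ^ 2 * t) * exp (-(-μ ^ 2) * w)
      - β * (exp (I * (μ - 1) * t) * exp (-(μ - 1) * w))
      + μ * (exp (I * (2 * μ) * t) * exp (-(2 * μ) * w))
      - β * μ ^ 2 * (exp (I * (μ - μ ^ 2) * t) * exp (-(μ - μ ^ 2) * w))) := by
    rw [hw]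
    field_simp
    ring
  have h0 := hshift (-μ ^ 2)
  have h1 := hshift (μ - 1)
  have h2 := hshift (2 * μ)
  have h3 := hshift (μ - μ ^ 2)
  rw [e0] at h0
  rw [e1] at h1
  rw [e2] at h2
  rw [e3] at h3
  simp only [cubicExpSum, sum_range_succ, sum_range_zero, pow_zero, pow_one, one_mul, mul_one,
    zero_add]
  linear_combination exp (-I * μ * ρ) * hw' - μ * hdom - h0 + β * h1 - μ * h2 + β * μ ^ 2 * h3

lemma norm_remainderFreq_le {μ : ℂ} (hμ : ‖μ‖ = 1) (j : Fin 4) : ‖remainderFreq μ j‖ ≤ 2 := by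
  have h2 : ‖μ ^ 2‖ = 1 := by rw [norm_pow, hμ, one_pow]
  fin_cases j <;>
    simp only [remainderFreq, Fin.zero_eta, Fin.mk_one, Fin.reduceFinMk, Matrix.cons_val]
  · rw [norm_neg, h2]; norm_num
  · exact (norm_sub_le _ _).trans (by rw [hμ, norm_one]; norm_num)
  · rw [norm_mul, hμ]; norm_num
  · exact (norm_sub_le _ _).trans (by rw [hμ, h2]; norm_num)

lemma norm_remainderCoeff_le {β μ : ℂ} (hβ : ‖β‖ ≤ 1) (hμ : ‖μ‖ = 1) (t : ℂ) (j : Fin 4) :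
    ‖remainderCoeff β μ t j‖ ≤ Real.exp (I * remainderFreq μ j * t).re / ‖β‖ := by
  have hc : ‖![1, -β, μ, -β * μ ^ 2] j‖ ≤ 1 := by
    fin_cases j <;> simp [hμ, hβ]
  rw [remainderCoeff, norm_mul, norm_mul, norm_neg, norm_inv, norm_mul, hμ, mul_one, norm_exp,
    div_eq_inv_mul]
  calc _ ≤ ‖β‖⁻¹ * 1 * Real.exp (I * remainderFreq μ j * t).re := by gcongr
    _ = _ := by rw [mul_one]

lemma exp_two_pi_mul_I_div_three :
    exp (2 * π * I / 3) = -1 / 2 + ((√3 / 2 : ℝ) : ℂ) * I := by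
  have hcos : Real.cos (2 * π / 3) = -1 / 2 := by
    rw [show 2 * π / 3 = π - π / 3 by ring, Real.cos_pi_sub, Real.cos_pi_div_three]; norm_num
  have hsin : Real.sin (2 * π / 3) = √3 / 2 := by
    rw [show 2 * π / 3 = π - π / 3 by ring, Real.sin_pi_sub, Real.sin_pi_div_three]
  rw [show 2 * π * I / 3 = ((2 * π / 3 : ℝ) : ℂ) * I by push_cast; ring, exp_mul_I,
    ← ofReal_cos, ← ofReal_sin, hcos, hsin]
  push_cast; ring

lemma isPrimitiveRoot_exp_two_pi_mul_I_div_three : IsPrimitiveRoot (exp (2 * π * I / 3)) 3 := by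
  simpa using isPrimitiveRoot_exp 3 (by norm_num)

lemma conj_exp_two_pi_mul_I_div_three :
    conj (exp (2 * π * I / 3)) = exp (2 * π * I / 3) ^ 2 := by
  have hprim := isPrimitiveRoot_exp_two_pi_mul_I_div_three
  rw [← inv_eq_conj (hprim.norm'_eq_one (by norm_num))]
  exact (eq_inv_of_mul_eq_one_left (by rw [← pow_succ, hprim.pow_eq_one])).symm

lemma remainderFreq_exp_two_pi_mul_I_div_three (j : Fin 4) :
    (remainderFreq (exp (2 * π * I / 3)) j).re ≤ 1 / 2 ∧
      √3 / 2 ≤ (remainderFreq (exp (2 * π * I / 3)) j).im := by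
  have h3 : √3 * √3 = 3 := Real.mul_self_sqrt (by norm_num)
  have h0 : 0 ≤ √3 := Real.sqrt_nonneg 3
  rw [exp_two_pi_mul_I_div_three]
  fin_cases j <;> simp [remainderFreq, sq] <;> (try constructor) <;> nlinarith

lemma re_I_mul_mul_le {ν t : ℂ} (hre : ν.re ≤ 1 / 2) (him : √3 / 2 ≤ ν.im) (ht_re : 0 ≤ t.re)
    (ht_im : t.im ≤ 0) : (I * ν * t).re ≤ -(√3 * t.re + t.im) / 2 := by
  simp only [mul_re, I_re, I_im, mul_im, zero_mul, one_mul, zero_sub]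
  nlinarith [mul_nonneg (sub_nonneg.2 him) ht_re,
    mul_nonneg_of_nonpos_of_nonpos (sub_nonpos.2 hre) ht_im]

lemma exists_cubicExpSum_eq_zero_near {ω : ℂ} (hω : ω = exp (2 * π * I / 3)) {β : ℝ}
    (hβ : β ∈ Ioo (-1 : ℝ) 0) {t : ℂ} (ht : ω * exp (-(I * t)) = β) (ht_re : 0 ≤ t.re)
    (ht_im : t.im ≤ 0) (hsmall : 32 * Real.exp 1 * Real.exp (-(√3 * t.re + t.im) / 2) ≤ -β) :
    ∃ ζ, cubicExpSum β ω ζ = 0 ∧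
      ‖ζ - t‖ ≤ 6 * Real.exp 1 / -β * Real.exp (-(√3 * t.re + t.im) / 2) := by
  have hprim := isPrimitiveRoot_exp_two_pi_mul_I_div_three
  rw [← hω] at hprim
  have hωnorm : ‖ω‖ = 1 := hprim.norm'_eq_one (by norm_num)
  have hβnorm : ‖(β : ℂ)‖ = -β := by rw [norm_real, Real.norm_of_nonpos hβ.2.le]
  set δ := Real.exp (-(√3 * t.re + t.im) / 2) / -β
  have ha : ∀ j, ‖remainderCoeff β ω t j‖ ≤ δ := fun j => by
    refine (norm_remainderCoeff_le (by rw [hβnorm]; linarith [hβ.1]) hωnorm t j).trans ?_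
    rw [hβnorm]
    refine div_le_div_of_nonneg_right (Real.exp_le_exp.2 ?_) (by linarith [hβ.2])
    subst hω
    obtain ⟨hre, him⟩ := remainderFreq_exp_two_pi_mul_I_div_three j
    exact re_I_mul_mul_le hre him ht_re ht_im
  have hcard : (#(Finset.univ : Finset (Fin 4)) : ℝ) = 4 := by simp
  have hδ : 8 * (#(Finset.univ : Finset (Fin 4)) * δ * Real.exp 1) ≤ 1 := by
    rw [hcard, show 8 * (4 * δ * Real.exp 1)
        = 32 * Real.exp 1 * Real.exp (-(√3 * t.re + t.im) / 2) / -β by simp only [δ]; ring,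
      div_le_one (by linarith [hβ.2])]
    exact hsmall
  obtain ⟨w, hw, hexp⟩ := exists_exp_eq_one_add_sum_mul_exp Finset.univ (fun j _ => ha j)
    (ν := fun j => -remainderFreq ω j)
    (fun j _ => by rw [norm_neg]; exact norm_remainderFreq_le hωnorm j) hδ
  refine ⟨t + I * w, cubicExpSum_eq_zero_of_exp_eq ?_ ht ?_ hexp, ?_⟩
  · simpa [sum_range_succ] using hprim.geom_sum_eq_zero (by norm_num)
  · exact_mod_cast hβ.2.ne
  · rw [add_sub_cancel_left, norm_mul, norm_I, one_mul]
    rw [hcard] at hw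
    calc ‖w‖ ≤ 3 / 2 * (4 * δ * Real.exp 1) := hw
      _ = _ := by simp only [δ]; ring

lemma exp_mul_exp_neg_I_mul_eq {ω : ℂ} (hω : ω = exp (2 * π * I / 3)) {β : ℝ} (hβ : β < 0)
    (m : ℕ) : ω * exp (-(I * ((2 * m - 1 / 3) * π + I * Real.log (-β)))) = β := by
  rw [hω, ← exp_add, show 2 * π * I / 3 + -(I * ((2 * m - 1 / 3) * π + I * Real.log (-β)))
      = Real.log (-β) + π * I + (-m : ℤ) * (2 * π * I) by
        push_cast; linear_combination (-(Real.log (-β) : ℂ)) * I_sq,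
    exp_add, exp_add, exp_int_mul_two_pi_mul_I, exp_pi_mul_I, ← ofReal_exp,
    Real.exp_log (by linarith)]
  push_cast; ring

lemma exists_seq_of_eventually_exists {α : Type*} {P : α → Prop} {Q : ℕ → α → Prop}
    (h : ∀ᶠ m in atTop, ∃ x, P x ∧ Q m x) :
    ∃ f : ℕ → α, (∀ m, P (f m)) ∧ ∀ᶠ m in atTop, Q m (f m) := by
  obtain ⟨M, hM⟩ := eventually_atTop.1 h
  choose f hf using fun m => hM (max m M) (le_max_right _ _)
  refine ⟨f, fun m => (hf m).1, eventually_atTop.2 ⟨M, fun m hm => ?_⟩⟩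
  simpa [max_eq_left hm] using (hf m).2

lemma exists_seq_cubicExpSum_eq_zero {ω : ℂ} (hω : ω = exp (2 * π * I / 3)) {β : ℝ}
    (hβ : β ∈ Ioo (-1 : ℝ) 0) : ∃ C, ∃ ζ : ℕ → ℂ, (∀ m, cubicExpSum β ω (ζ m) = 0) ∧
      ∀ᶠ m : ℕ in atTop,
        ‖ζ m - ((2 * m - 1 / 3) * π + I * Real.log (-β))‖ ≤ C * Real.exp (-(√3 * π * m)) := by
  set L := Real.log (-β)
  have hL : L < 0 := Real.log_neg (by linarith [hβ.2]) (by linarith [hβ.1])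
  set A := Real.exp (√3 * π / 6 - L / 2)
  have hexp : ∀ m : ℕ, Real.exp (-(√3 * ((2 * m - 1 / 3) * π) + L) / 2)
      = A * Real.exp (-(√3 * π * m)) := fun m => by
    rw [← Real.exp_add]; congr 1; ring
  have hlim : Tendsto (fun m : ℕ => Real.exp (-(√3 * π * m))) atTop (𝓝 0) :=
    Real.tendsto_exp_neg_atTop_nhds_zero.comp
      (tendsto_natCast_atTop_atTop.const_mul_atTop (by positivity))
  have hsmall := hlim.eventually (eventually_le_nhds (show 0 < -β / (32 * Real.exp 1 * A) from
    div_pos (by linarith [hβ.2]) (by positivity)))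
  refine ⟨6 * Real.exp 1 / -β * A, exists_seq_of_eventually_exists (P := (cubicExpSum β ω · = 0))
    (Q := fun m ζ => ‖ζ - ((2 * m - 1 / 3) * π + I * L)‖
      ≤ 6 * Real.exp 1 / -β * A * Real.exp (-(√3 * π * m))) ?_⟩
  filter_upwards [hsmall, eventually_ge_atTop 1] with m hm hm1
  have hm1' : (1 : ℝ) ≤ m := by exact_mod_cast hm1
  have hre : ((2 * m - 1 / 3) * π + I * L : ℂ).re = (2 * m - 1 / 3) * π := by simp
  have him : ((2 * m - 1 / 3) * π + I * L : ℂ).im = L := by simp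
  obtain ⟨ζ, hζ, hζt⟩ := exists_cubicExpSum_eq_zero_near hω hβ
    (exp_mul_exp_neg_I_mul_eq hω hβ.2 m) (by rw [hre]; nlinarith [Real.pi_pos])
    (by rw [him]; exact hL.le) (by
      rw [hre, him, hexp]
      rw [le_div_iff₀ (by positivity)] at hm
      linarith)
  refine ⟨ζ, hζ, ?_⟩
  rw [hre, him, hexp] at hζt
  linarith


lemma cubicExpSum_neg_conj_eq_zero {ω : ℂ} (hω : ω = exp (2 * π * I / 3)) (β : ℝ) {ρ : ℂ}
    (hρ : cubicExpSum β ω ρ = 0) : cubicExpSum β ω (-conj ρ) = 0 := by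
  subst hω
  rw [cubicExpSum_neg_conj β conj_exp_two_pi_mul_I_div_three
    isPrimitiveRoot_exp_two_pi_mul_I_div_three.pow_eq_one, hρ, map_zero]

noncomputable def interleaveReflect (ζ : ℕ → ℂ) (k : ℕ) : ℂ :=
  if Even k then ζ (k / 2) else -conj (ζ (k / 2 + 1))

lemma norm_interleaveReflect_sub_le {ζ : ℕ → ℂ} {C L : ℝ} {M : ℕ}
    (hM : ∀ m ≥ M, ‖ζ m - ((2 * m - 1 / 3) * π + I * L)‖ ≤ C * Real.exp (-(√3 * π * m)))
    {k : ℕ} (hk : 2 * M ≤ k) :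
    ‖interleaveReflect ζ k -
        ((if Even k then ((k : ℂ) - 1 / 3) * π else (-(k : ℂ) - 2 / 3) * π) + I * L)‖
      ≤ C * Real.exp (-√3 * k * π / 2) := by
  have hC : 0 ≤ C := (mul_nonneg_iff_of_pos_right (Real.exp_pos _)).1
    ((norm_nonneg _).trans (hM M le_rfl))
  obtain ⟨m, rfl | rfl⟩ := Nat.even_or_odd' k
  · have hm : 2 * m / 2 = m := by omega
    simp only [interleaveReflect, even_two_mul, if_true, hm]
    convert hM m (by omega) using 3
    · push_cast; ring
    · push_cast; ring
  · have hm : (2 * m + 1) / 2 = m := by omega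
    have hodd : ¬Even (2 * m + 1) := Nat.not_even_iff_odd.2 (odd_two_mul_add_one m)
    simp only [interleaveReflect, hodd, if_false, hm]
    have htarget : ((-((2 * m + 1 : ℕ) : ℂ) - 2 / 3) * π + I * L)
        = -conj ((2 * ((m + 1 : ℕ) : ℂ) - 1 / 3) * π + I * L) := by
      simp only [map_add, map_mul, map_sub, map_ofNat, map_natCast, map_div₀, map_one, conj_ofReal,
        conj_I]
      push_cast; ring
    rw [htarget, ← neg_sub', ← map_sub, norm_neg, Complex.norm_conj]
    refine (hM (m + 1) (by omega)).trans (mul_le_mul_of_nonneg_left (Real.exp_le_exp.2 ?_) hC)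
    have : 0 ≤ √3 * π := by positivity
    push_cast
    linarith


theorem stmt7 (ω : ℂ) (hω : ω = Complex.exp (2 * π * Complex.I / 3))
    (β : ℝ) (hβ : β ∈ Set.Ioo (-1 : ℝ) 0)
    (Δ : ℂ → ℂ)
    (hΔ : ∀ ρ, Δ ρ = Complex.I * ρ * (ω - ω ^ 2) *
      ((∑ r ∈ Finset.range 3, ω ^ r * Complex.exp (Complex.I * ω ^ r * ρ))
        - β * ∑ r ∈ Finset.range 3, ω ^ r * Complex.exp (-Complex.I * ω ^ r * ρ))) :
    ∃ σ : ℕ → ℂ, (∀ k, Δ (σ k) = 0) ∧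
      (fun k : ℕ => σ k -
          ((if Even k then ((k : ℂ) - 1 / 3) * (π : ℂ) else (-(k : ℂ) - 2 / 3) * (π : ℂ))
            + Complex.I * (Real.log (-β) : ℂ)))
        =O[atTop] fun k : ℕ => Real.exp (-(Real.sqrt 3) * (k : ℝ) * π / 2) := by
  obtain ⟨C, ζ, hζ, hζt⟩ := exists_seq_cubicExpSum_eq_zero hω hβ
  obtain ⟨M, hM⟩ := eventually_atTop.1 hζt
  have hΔζ : ∀ ρ, cubicExpSum β ω ρ = 0 → Δ ρ = 0 := fun ρ h => by
    rw [hΔ]; exact mul_eq_zero_of_right _ h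
  refine ⟨interleaveReflect ζ, fun k => ?_, IsBigO.of_bound C ?_⟩
  · unfold interleaveReflect
    split_ifs
    exacts [hΔζ _ (hζ _), hΔζ _ (cubicExpSum_neg_conj_eq_zero hω β (hζ _))]
  · filter_upwards [eventually_ge_atTop (2 * M)] with k hk
    rw [Real.norm_of_nonneg (Real.exp_pos _).le]
    exact norm_interleaveReflect_sub_le hM hk
end

section
/- Let ω = e^{2πi/3}. Every zero of g(ρ) = e^{-iρ} + e^{-iωρ} + e^{-iω²ρ} - 3 on the negative imaginary axis satisfies: the sequence σ_k of such zeros (Re σ_k = 0, Im σ_k < 0) obeys iσ_k = (2π/√3)(k - 1/2) + O(e^{-kπ√3/3}) as k → ∞. -/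
open Filter Asymptotics
open scoped Real

/-!
On the negative imaginary axis `g (-i t) = f t := e^{-t} + 2 e^{t/2} cos (√3 t / 2) - 3` is real.
Cut `(0, ∞)` into windows of half-width `δ = π / (2√3)` around the multiples of `2δ`; there
`√3 t / 2` lies within `π / 4` of a multiple of `π / 2`. Around the even multiples `4 m δ`,
`cos (√3 t / 2) = ±cos w` with `cos w ≥ 1/2`, and since `e^{t/2} > 3` there, `f ≠ 0`. Around the odd
multiples `a k = (2π/√3)(k - 1/2)` the function `(-1)^k f` is strictly increasing, and
`(-1)^k f (a k + s)` differs from `2 e^{(a k + s)/2} sin (√3 s / 2)` by at most `3`, so it changes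
sign on `|s| ≤ ε k = 6 e^{-a k / 2}`; each of these windows contains exactly one zero, within
`ε k` of `a k`. The first window (`k = 1`) contains none: `f`, `f'`, `f''` vanish at `0` and
`f''' < 0` on `(0, 2δ)`, so `f < 0` on `(0, 3δ]`.
-/

namespace CubeRootsExpSum

open Real Set

noncomputable section

def F (n : ℕ) (t : ℝ) : ℝ :=
  (-1) ^ n * exp (-t) + 2 * exp (t / 2) * cos (√3 * t / 2 + n * π / 3)

def f (t : ℝ) : ℝ := F 0 t - 3

def δ : ℝ := π / (2 * √3)

def a (k : ℕ) : ℝ := 2 * π / √3 * ((k : ℝ) - 1 / 2)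

def ε (k : ℕ) : ℝ := 6 * exp (-(a k / 2))

end

theorem neg_on_Ioc_of_hasDerivAt_neg {f f' : ℝ → ℝ} {a b : ℝ}
    (hf : ∀ x, HasDerivAt f (f' x) x) (ha : f a = 0) (hf' : ∀ x ∈ Ioo a b, f' x < 0) :
    ∀ x ∈ Ioc a b, f x < 0 := by
  intro x hx
  have hanti : StrictAntiOn f (Icc a b) :=
    strictAntiOn_of_deriv_neg (convex_Icc a b) (fun y _ => (hf y).continuousAt.continuousWithinAt)
      fun y hy => by rw [(hf y).deriv]; exact hf' y (by rwa [interior_Icc] at hy)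
  simpa [ha] using hanti (left_mem_Icc.2 (hx.1.le.trans hx.2)) (Ioc_subset_Icc_self hx) hx.1

theorem one_sub_two_div_pi_mul_abs_le_cos {x : ℝ} (hx : |x| ≤ π / 2) :
    1 - 2 / π * |x| ≤ cos x := by
  rw [← cos_abs, ← sin_pi_div_two_sub]
  convert mul_le_sin (x := π / 2 - |x|) (by linarith) (by linarith [abs_nonneg x]) using 1
  field_simp

/-- Differentiation rotates the phase by `π / 3`, because `1/2 + i √3/2 = e^{iπ/3}`. -/
theorem hasDerivAt_exp_mul_cos (c t : ℝ) :
    HasDerivAt (fun t => 2 * exp (t / 2) * cos (√3 * t / 2 + c))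
      (2 * exp (t / 2) * cos (√3 * t / 2 + (c + π / 3))) t := by
  have hexp : HasDerivAt (fun t => exp (t / 2)) (exp (t / 2) * (1 / 2)) t := by
    simpa using ((hasDerivAt_id t).div_const 2).exp
  have hcos :
      HasDerivAt (fun t => cos (√3 * t / 2 + c)) (-sin (√3 * t / 2 + c) * (√3 / 2)) t := by
    simpa using ((((hasDerivAt_id t).const_mul √3).div_const 2).add_const c).cos
  refine ((hexp.const_mul 2).mul hcos).congr_deriv ?_
  rw [← add_assoc, cos_add (_ + c), cos_pi_div_three, sin_pi_div_three]
  ring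

theorem hasDerivAt_F (n : ℕ) (t : ℝ) : HasDerivAt (F n) (F (n + 1) t) t := by
  have hexp : HasDerivAt (fun t => (-1) ^ n * exp (-t)) ((-1) ^ (n + 1) * exp (-t)) t := by
    simpa [pow_succ] using ((hasDerivAt_id t).neg.exp).const_mul ((-1 : ℝ) ^ n)
  have h := hexp.add (hasDerivAt_exp_mul_cos (n * π / 3) t)
  rwa [show (n : ℝ) * π / 3 + π / 3 = ((n + 1 : ℕ) : ℝ) * π / 3 by push_cast; ring] at h

theorem hasDerivAt_f (t : ℝ) : HasDerivAt f (F 1 t) t := (hasDerivAt_F 0 t).sub_const 3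

theorem continuous_f : Continuous f :=
  continuous_iff_continuousAt.2 fun t => (hasDerivAt_f t).continuousAt

theorem f_apply (t : ℝ) : f t = exp (-t) + 2 * exp (t / 2) * cos (√3 * t / 2) - 3 := by
  simp [f, F]

theorem f_zero : f 0 = 0 := by norm_num [f_apply]

theorem F_one_zero : F 1 0 = 0 := by norm_num [F]

theorem F_two_zero : F 2 0 = 0 := by
  rw [F, show ((2 : ℕ) : ℝ) * π / 3 = π - π / 3 by push_cast; ring]
  norm_num [cos_pi_sub]

theorem F_three (t : ℝ) : F 3 t = -exp (-t) - 2 * exp (t / 2) * cos (√3 * t / 2) := by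
  rw [F, show ((3 : ℕ) : ℝ) * π / 3 = π by push_cast; ring, cos_add_pi]
  ring

theorem δ_pos : 0 < δ := by unfold δ; positivity

theorem sqrt_three_mul_δ : √3 * δ = π / 2 := by
  unfold δ; field_simp

theorem nine_tenths_lt_δ : 0.9 < δ := by
  have hsqrt : √3 < 1.74 := (sqrt_lt' (by norm_num)).2 (by norm_num)
  rw [δ, lt_div_iff₀ (by positivity)]
  linarith [pi_gt_d2]

theorem three_lt_exp_three_mul_δ_div_two : 3 < exp (3 * δ / 2) := by
  have := quadratic_le_exp_of_nonneg (x := 3 * δ / 2) (by linarith [δ_pos])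
  nlinarith [nine_tenths_lt_δ]

theorem abs_sqrt_three_mul_sub_div_two_le {t c : ℝ} (h : |t - c| ≤ δ) :
    |√3 * (t - c) / 2| ≤ π / 4 := by
  rw [abs_div, abs_mul, abs_of_pos (sqrt_pos.2 three_pos), abs_two]
  nlinarith [sqrt_three_mul_δ, sqrt_pos.2 (show (0 : ℝ) < 3 by norm_num)]

theorem a_eq (k : ℕ) : a k = (2 * k - 1) * (2 * δ) := by
  unfold a δ; field_simp

theorem two_mul_δ_le_a {k : ℕ} (hk : 1 ≤ k) : 2 * δ ≤ a k := by
  rw [a_eq]; nlinarith [δ_pos, (Nat.one_le_cast (α := ℝ)).2 hk]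

theorem δ_le_of_abs_sub_a_le {k : ℕ} (hk : 1 ≤ k) {t : ℝ} (ht : |t - a k| ≤ δ) :
    δ ≤ t := by
  linarith [(abs_le.1 ht).1, two_mul_δ_le_a hk]

theorem sqrt_three_mul_a_add_div_two (k : ℕ) (s : ℝ) :
    √3 * (a k + s) / 2 = √3 * s / 2 - π / 2 + k * π := by
  rw [a_eq]; linear_combination (2 * (k : ℝ) - 1) * sqrt_three_mul_δ

theorem F_three_neg {t : ℝ} (ht : t ∈ Ioo 0 (2 * δ)) : F 3 t < 0 := by
  have hcos : 0 < cos (√3 * t / 2) := by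
    apply cos_pos_of_mem_Ioo
    constructor
    · nlinarith [ht.1, sqrt_nonneg 3, pi_pos]
    · nlinarith [ht.2, sqrt_three_mul_δ, sqrt_pos.2 (show (0 : ℝ) < 3 by norm_num)]
  rw [F_three]
  nlinarith [exp_pos (-t), exp_pos (t / 2)]

theorem f_neg_of_mem_Ioc {t : ℝ} (ht : t ∈ Ioc 0 (2 * δ)) : f t < 0 := by
  have hF2 := neg_on_Ioc_of_hasDerivAt_neg (hasDerivAt_F 2) F_two_zero fun x hx ↦ F_three_neg hx
  have hF1 := neg_on_Ioc_of_hasDerivAt_neg (hasDerivAt_F 1) F_one_zero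
    fun x hx ↦ hF2 x (Ioo_subset_Ioc_self hx)
  exact neg_on_Ioc_of_hasDerivAt_neg hasDerivAt_f f_zero
    (fun x hx ↦ hF1 x (Ioo_subset_Ioc_self hx)) t ht

theorem neg_one_pow_mul_F_one_pos {k : ℕ} (hk : 1 ≤ k) {t : ℝ} (ht : |t - a k| < δ) :
    0 < (-1) ^ k * F 1 t := by
  set v := √3 * (t - a k) / 2
  have hv : |v - π / 6| ≤ 5 * π / 12 := by
    calc |v - π / 6| ≤ |v| + |π / 6| := abs_sub _ _
      _ ≤ 5 * π / 12 := by
        rw [abs_of_pos (by positivity : (0 : ℝ) < π / 6)]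
        linarith [abs_sqrt_three_mul_sub_div_two_le ht.le]
  have hcos : 1 / 6 ≤ cos (v - π / 6) := by
    have := one_sub_two_div_pi_mul_abs_le_cos (hv.trans (by linarith [pi_pos]))
    have : 2 / π * |v - π / 6| ≤ 5 / 6 := by
      rw [div_mul_eq_mul_div, div_le_iff₀ pi_pos]; linarith
    linarith
  have hF : (-1) ^ k * F 1 t = -((-1) ^ k * exp (-t)) + 2 * exp (t / 2) * cos (v - π / 6) := by
    have := sqrt_three_mul_a_add_div_two k (t - a k)
    rw [add_sub_cancel] at this
    rw [F, this, show v - π / 2 + k * π + (1 : ℕ) * π / 3 = v - π / 6 + k * π by push_cast; ring,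
      cos_add_nat_mul_pi]
    linear_combination (2 * exp (t / 2) * cos (v - π / 6)) *
      pow_mul_pow_eq_one k (by norm_num : (-1 : ℝ) * -1 = 1)
  have hδt : δ < t := by linarith [(abs_lt.1 ht).1, two_mul_δ_le_a hk]
  have hexp : 3 * exp (-t) < exp (t / 2) := by
    calc 3 * exp (-t) < exp (3 * t / 2) * exp (-t) := by
          gcongr
          exact three_lt_exp_three_mul_δ_div_two.trans (exp_lt_exp.2 (by linarith))
      _ = exp (t / 2) := by rw [← exp_add]; ring_nf
  have hsign : (-1) ^ k * exp (-t) ≤ exp (-t) := by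
    rcases neg_one_pow_eq_or ℝ k with h | h <;> rw [h] <;> linarith [exp_pos (-t)]
  rw [hF]
  nlinarith [exp_pos (t / 2)]

theorem strictMonoOn_neg_one_pow_mul_f {k : ℕ} (hk : 1 ≤ k) :
    StrictMonoOn (fun t => (-1) ^ k * f t) (Icc (a k - δ) (a k + δ)) := by
  have hderiv (t : ℝ) : HasDerivAt (fun t => (-1) ^ k * f t) ((-1) ^ k * F 1 t) t :=
    (hasDerivAt_f t).const_mul _
  refine strictMonoOn_of_deriv_pos (convex_Icc _ _)
    (fun t _ => (hderiv t).continuousAt.continuousWithinAt) fun t ht => ?_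
  rw [interior_Icc] at ht
  rw [(hderiv t).deriv]
  exact neg_one_pow_mul_F_one_pos hk (abs_sub_lt_iff.2 ⟨by linarith [ht.2], by linarith [ht.1]⟩)

theorem eq_of_f_eq_zero_of_abs_sub_a_le {k : ℕ} (hk : 1 ≤ k) {t t' : ℝ}
    (ht : |t - a k| ≤ δ) (ht' : |t' - a k| ≤ δ) (hft : f t = 0) (hft' : f t' = 0) : t = t' :=
  (strictMonoOn_neg_one_pow_mul_f hk).injOn
    (mem_Icc_iff_abs_le.1 ((abs_sub_comm _ _).trans_le ht))
    (mem_Icc_iff_abs_le.1 ((abs_sub_comm _ _).trans_le ht')) (by simp only [hft, hft'])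

theorem f_neg_of_mem_Ioc_three_mul_δ {t : ℝ} (ht : t ∈ Ioc 0 (3 * δ)) : f t < 0 := by
  rcases le_or_gt t (2 * δ) with ht2 | ht2
  · exact f_neg_of_mem_Ioc ⟨ht.1, ht2⟩
  have hmono := strictMonoOn_neg_one_pow_mul_f le_rfl
  rw [show a 1 - δ = δ by rw [a_eq]; ring, show a 1 + δ = 3 * δ by rw [a_eq]; ring] at hmono
  have hδ := δ_pos
  have := hmono ⟨le_rfl, by linarith⟩ ⟨by linarith, ht.2⟩ (by linarith)
  have hfδ := f_neg_of_mem_Ioc ⟨hδ, by linarith⟩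
  simp only [pow_one, neg_one_mul] at this
  linarith

theorem f_ne_zero_of_abs_sub_le {m : ℕ} (hm : 1 ≤ m) {t : ℝ} (ht : |t - 4 * m * δ| ≤ δ) :
    f t ≠ 0 := by
  set w := √3 * (t - 4 * m * δ) / 2
  have hcos : 1 / 2 ≤ cos w := by
    have hw := abs_sqrt_three_mul_sub_div_two_le ht
    have := one_sub_two_div_pi_mul_abs_le_cos (hw.trans (by linarith [pi_pos]))
    have : 2 / π * |w| ≤ 1 / 2 := by
      rw [div_mul_eq_mul_div, div_le_iff₀ pi_pos]; linarith
    linarith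
  have hf : f t = exp (-t) + (-1) ^ m * (2 * exp (t / 2) * cos w) - 3 := by
    rw [f_apply, show √3 * t / 2 = w + m * π by
      linear_combination (2 * (m : ℝ)) * sqrt_three_mul_δ, cos_add_nat_mul_pi]
    ring
  have ht3 : 3 * δ ≤ t := by
    nlinarith [(abs_le.1 ht).1, δ_pos, (Nat.one_le_cast (α := ℝ)).2 hm]
  have hexp : 3 < exp (t / 2) :=
    three_lt_exp_three_mul_δ_div_two.trans_le (exp_le_exp.2 (by linarith))
  have hexp_neg : exp (-t) ≤ 1 := exp_le_one_iff.2 (by linarith [δ_pos])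
  rw [hf]
  rcases neg_one_pow_eq_or ℝ m with h | h <;> rw [h] <;> nlinarith [exp_pos (-t), exp_pos (t / 2)]

theorem exists_abs_sub_a_le_of_f_eq_zero {t : ℝ} (ht : 0 < t) (hft : f t = 0) :
    ∃ k, 2 ≤ k ∧ |t - a k| ≤ δ := by
  have h3δ : 3 * δ < t := by
    by_contra! h
    exact (f_neg_of_mem_Ioc_three_mul_δ ⟨ht, h⟩).ne hft
  have hδ := δ_pos
  set n := ⌊t / (2 * δ) + 1 / 2⌋₊
  have hn : |t - n * (2 * δ)| ≤ δ := by
    have h1 : (n : ℝ) ≤ t / (2 * δ) + 1 / 2 := Nat.floor_le (by positivity)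
    have h2 : t / (2 * δ) + 1 / 2 < n + 1 := Nat.lt_floor_add_one _
    have ht : t / (2 * δ) * (2 * δ) = t := div_mul_cancel₀ _ (by positivity)
    rw [abs_le]; constructor <;> nlinarith
  have hn2 : 2 ≤ n := by
    refine Nat.le_floor ?_
    have : 3 / 2 ≤ t / (2 * δ) := by rw [le_div_iff₀ (by positivity)]; linarith
    push_cast; linarith
  obtain ⟨j, hj | hj⟩ := Nat.even_or_odd' n <;> rw [hj] at hn <;> push_cast at hn
  · refine absurd hft (f_ne_zero_of_abs_sub_le (m := j) (by omega) ?_)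
    convert hn using 3; ring
  · refine ⟨j + 1, by omega, ?_⟩
    rw [a_eq]; push_cast; convert hn using 3; ring

theorem neg_one_pow_mul_f_a_add (k : ℕ) (s : ℝ) :
    (-1) ^ k * f (a k + s) =
      (-1) ^ k * (exp (-(a k + s)) - 3) + 2 * exp ((a k + s) / 2) * sin (√3 * s / 2) := by
  rw [f_apply, sqrt_three_mul_a_add_div_two, cos_add_nat_mul_pi, cos_sub_pi_div_two]
  linear_combination (2 * exp ((a k + s) / 2) * sin (√3 * s / 2)) *
    pow_mul_pow_eq_one k (by norm_num : (-1 : ℝ) * -1 = 1)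

theorem abs_neg_one_pow_mul_exp_neg_sub_three_le (k : ℕ) {x : ℝ} (hx : 0 ≤ x) :
    |(-1) ^ k * (exp (-x) - 3)| ≤ 3 := by
  rw [abs_mul, abs_pow, abs_neg, abs_one, one_pow, one_mul, abs_le]
  constructor <;> linarith [exp_pos (-x), exp_le_one_iff.2 (neg_nonpos.2 hx)]

theorem ε_pos (k : ℕ) : 0 < ε k := by unfold ε; positivity

theorem exp_a_div_two_mul_ε (k : ℕ) : exp (a k / 2) * ε k = 6 := by
  rw [ε, mul_left_comm, ← exp_add, add_neg_cancel, exp_zero, mul_one]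

theorem ε_lt_two_thirds {k : ℕ} (hk : 2 ≤ k) : ε k < 2 / 3 := by
  have h9 : 9 < exp (a k / 2) := by
    have h3 := three_lt_exp_three_mul_δ_div_two
    calc (9 : ℝ) < exp (3 * δ / 2) * exp (3 * δ / 2) := by nlinarith
      _ ≤ exp (a k / 2) := by
        rw [← exp_add, a_eq]
        exact exp_le_exp.2 (by nlinarith [δ_pos, (Nat.ofNat_le_cast (α := ℝ)).2 hk])
  nlinarith [exp_a_div_two_mul_ε k, ε_pos k]

theorem ε_lt_δ {k : ℕ} (hk : 2 ≤ k) : ε k < δ := by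
  linarith [ε_lt_two_thirds hk, nine_tenths_lt_δ]

theorem three_lt_two_mul_exp_mul_sin {k : ℕ} (hk : 2 ≤ k) :
    3 < 2 * exp ((a k - ε k) / 2) * sin (√3 * ε k / 2) := by
  have hε := ε_pos k
  have hsqrt : 1.7 < √3 := (lt_sqrt (by norm_num)).2 (by norm_num)
  have hsqrt' : √3 < 2 := (sqrt_lt' (by norm_num)).2 (by norm_num)
  have hsin : √3 * ε k / π ≤ sin (√3 * ε k / 2) := by
    convert mul_le_sin (x := √3 * ε k / 2) (by positivity)
      (by nlinarith [pi_gt_three, ε_lt_two_thirds hk]) using 1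
    field_simp
  have hexp : 2 / 3 ≤ exp (-(ε k / 2)) := by
    linarith [add_one_le_exp (-(ε k / 2)), ε_lt_two_thirds hk]
  calc (3 : ℝ) < 8 * √3 / π := by rw [lt_div_iff₀ pi_pos]; linarith [pi_lt_d2]
    _ = 4 / 3 * (exp (a k / 2) * ε k) * √3 / π := by rw [exp_a_div_two_mul_ε]; ring
    _ = 2 * exp (a k / 2) * (2 / 3) * (√3 * ε k / π) := by ring
    _ ≤ 2 * exp (a k / 2) * exp (-(ε k / 2)) * sin (√3 * ε k / 2) := by gcongr
    _ = 2 * exp ((a k - ε k) / 2) * sin (√3 * ε k / 2) := by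
      rw [mul_assoc 2, ← exp_add]; ring_nf

theorem exists_f_eq_zero_near_a {k : ℕ} (hk : 2 ≤ k) :
    ∃ t, |t - a k| ≤ ε k ∧ f t = 0 := by
  have hB := three_lt_two_mul_exp_mul_sin hk
  have hε := ε_pos k
  have hpos : 0 ≤ a k - ε k := by linarith [two_mul_δ_le_a (by omega : 1 ≤ k), ε_lt_δ hk]
  have hplus : 0 < (-1) ^ k * f (a k + ε k) := by
    rw [neg_one_pow_mul_f_a_add]
    have :=
      (abs_le.1 (abs_neg_one_pow_mul_exp_neg_sub_three_le k (x := a k + ε k) (by linarith))).1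
    have : 2 * exp ((a k - ε k) / 2) * sin (√3 * ε k / 2) ≤
        2 * exp ((a k + ε k) / 2) * sin (√3 * ε k / 2) := by
      gcongr
      · exact (pos_of_mul_pos_right (three_pos.trans hB) (by positivity)).le
      · linarith
    linarith
  have hminus : (-1) ^ k * f (a k - ε k) < 0 := by
    rw [sub_eq_add_neg, neg_one_pow_mul_f_a_add, mul_neg, neg_div, sin_neg, ← sub_eq_add_neg]
    have := (abs_le.1 (abs_neg_one_pow_mul_exp_neg_sub_three_le k hpos)).2
    linarith
  have hcont : ContinuousOn (fun t => (-1) ^ k * f t) (Icc (a k - ε k) (a k + ε k)) :=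
    (continuous_const.mul continuous_f).continuousOn
  obtain ⟨t, ht, hft⟩ := intermediate_value_Icc (by linarith) hcont ⟨hminus.le, hplus.le⟩
  exact ⟨t, abs_sub_le_iff.2 ⟨by linarith [ht.2], by linarith [ht.1]⟩,
    (mul_eq_zero.1 hft).resolve_left (pow_ne_zero _ (by norm_num))⟩

theorem ε_eq (k : ℕ) : ε k = 6 * exp δ * exp (-(k : ℝ) * π * √3 / 3) := by
  have hδ : δ = π * √3 / 6 := by
    rw [δ]; field_simp; rw [sq_sqrt (by norm_num)]; ring
  rw [ε, mul_assoc, ← exp_add, a_eq, hδ]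
  ring_nf

theorem cexp_two_pi_I_div_three :
    Complex.exp (2 * π * Complex.I / 3) = -1 / 2 + (√3 / 2 : ℝ) * Complex.I := by
  rw [show 2 * π * Complex.I / 3 = ((π - π / 3 : ℝ) : ℂ) * Complex.I by push_cast; ring,
    Complex.exp_mul_I, ← Complex.ofReal_cos, ← Complex.ofReal_sin, cos_pi_sub, sin_pi_sub,
    cos_pi_div_three, sin_pi_div_three]
  push_cast; ring

theorem cexp_sum_neg_I_mul {ω : ℂ} (hω : ω = Complex.exp (2 * π * Complex.I / 3)) (t : ℝ) :
    Complex.exp (-Complex.I * (-Complex.I * t)) + Complex.exp (-Complex.I * ω * (-Complex.I * t))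
      + Complex.exp (-Complex.I * ω ^ 2 * (-Complex.I * t)) - 3 = f t := by
  have hexp (x y : ℝ) :
      Complex.exp (x + y * Complex.I) = exp x * cos y + exp x * sin y * Complex.I := by
    rw [Complex.exp_add, Complex.exp_mul_I]; push_cast; ring
  have hsqrt : ((√3 : ℝ) : ℂ) ^ 2 = 3 := by norm_cast; simp
  rw [hω, cexp_two_pi_I_div_three, f_apply,
    show -Complex.I * (-Complex.I * t) = ((-t : ℝ) : ℂ) by
      push_cast; ring_nf; simp [Complex.I_sq],
    show -Complex.I * (-1 / 2 + (√3 / 2 : ℝ) * Complex.I) * (-Complex.I * t)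
      = ((t / 2 : ℝ) : ℂ) + ((-(√3 * t / 2)) : ℝ) * Complex.I by
      push_cast; ring_nf; simp [Complex.I_sq]; ring,
    show -Complex.I * (-1 / 2 + (√3 / 2 : ℝ) * Complex.I) ^ 2 * (-Complex.I * t)
      = ((t / 2 : ℝ) : ℂ) + ((√3 * t / 2 : ℝ)) * Complex.I by
      push_cast; ring_nf; simp [Complex.I_sq, hsqrt]; ring,
    ← Complex.ofReal_exp, hexp, hexp, cos_neg, sin_neg]
  push_cast; ring

end CubeRootsExpSum

open CubeRootsExpSum in
theorem stmt8 (ω : ℂ) (hω : ω = Complex.exp (2 * π * Complex.I / 3))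
    (g : ℂ → ℂ)
    (hg : ∀ ρ, g ρ = Complex.exp (-Complex.I * ρ) + Complex.exp (-Complex.I * ω * ρ)
      + Complex.exp (-Complex.I * ω ^ 2 * ρ) - 3) :
    ∃ σ : ℕ → ℂ,
      (∀ k, g (σ k) = 0 ∧ (σ k).re = 0 ∧ (σ k).im < 0) ∧
      (∀ ρ : ℂ, g ρ = 0 → ρ.re = 0 → ρ.im < 0 → ∃ k, ρ = σ k) ∧
      (fun k : ℕ => Complex.I * σ k
          - (((2 * π / Real.sqrt 3) * ((k : ℝ) - 1 / 2) : ℝ) : ℂ))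
        =O[atTop] fun k : ℕ => Real.exp (-(k : ℝ) * π * Real.sqrt 3 / 3) := by
  have hg_axis (t : ℝ) : g (-Complex.I * t) = f t := by rw [hg, cexp_sum_neg_I_mul hω]
  -- The zeros are indexed from `k = 2` (there is none near `a 1`), so `σ 0 = σ 1 = σ 2`.
  choose t ht_near ht_zero using fun k : ℕ => exists_f_eq_zero_near_a (le_max_right k 2)
  have ht_window (k : ℕ) : |t k - a (max k 2)| ≤ δ :=
    (ht_near k).trans (ε_lt_δ (le_max_right k 2)).le
  refine ⟨fun k => -Complex.I * t k, fun k => ⟨?_, ?_, ?_⟩, fun ρ hρ hre him => ?_, ?_⟩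
  · rw [hg_axis, ht_zero]; simp
  · simp
  · simpa using δ_pos.trans_le (δ_le_of_abs_sub_a_le (by omega) (ht_window k))
  · have hρ_eq : ρ = -Complex.I * (-ρ.im : ℝ) := by apply Complex.ext <;> simp [hre]
    rw [hρ_eq, hg_axis] at hρ
    obtain ⟨k, hk, hk_near⟩ :=
      exists_abs_sub_a_le_of_f_eq_zero (neg_pos.2 him) (by exact_mod_cast hρ)
    refine ⟨k, hρ_eq.trans ?_⟩
    rw [eq_of_f_eq_zero_of_abs_sub_a_le (by omega) hk_near (max_eq_left hk ▸ ht_window k)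
      (by exact_mod_cast hρ) (max_eq_left hk ▸ ht_zero k)]
  · refine IsBigO.of_bound (6 * Real.exp δ) ?_
    filter_upwards [eventually_ge_atTop 2] with k hk
    have hI : Complex.I * (-Complex.I * t k) - ((a k : ℝ) : ℂ) = ((t k - a k : ℝ) : ℂ) := by
      push_cast; ring_nf; simp [Complex.I_sq]
    change ‖Complex.I * (-Complex.I * t k) - ((a k : ℝ) : ℂ)‖ ≤ _
    have h_near := ht_near k
    rw [max_eq_left hk] at h_near
    rwa [hI, Complex.norm_real, Real.norm_of_nonneg (Real.exp_pos _).le, ← ε_eq]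
end

section
/- Let ω = e^{2πi/3} and let σ be purely imaginary with Im(σ) > 0 and e^{iσ} + ωe^{iωσ} + ω²e^{iω²σ} = 0. Then the eigenfunctions φ(x) = Σ_{r=0}^{2} e^{iω^rσx}(e^{iω^{r+2}σ} − e^{iω^{r+1}σ}) and ψ(x) = Σ_{r=0}^{2} e^{-iω^rσx}(e^{-iω^{r+2}σ} − e^{-iω^{r+1}σ}) satisfy the reflection-conjugation relation conj(ψ(1−x)) = C·φ(x) for all x ∈ [0,1], for some nonzero constant C depending only on σ. -/
/-!
Put `a = iσ`, which is real because `σ` is purely imaginary, so that `φ` and `ψ` are the sums of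
the terms `e^{ω^r a x}(e^{ω^{r+2} a} - e^{ω^{r+1} a})` for `a` and `-a`. Since `conj ω = ω²`,
conjugating the `r`-th term of `ψ(1 - x)` gives `e^{-ω^{2r} a (1-x)}(e^{-ω^{2r+1} a} - e^{-ω^{2r+2} a})`,
and `ω^{2r} + ω^{2r+1} + ω^{2r+2} = 0` turns this into the `2r`-th term of `φ(x)`. As `r ↦ 2r`
permutes `ℤ/3`, the identity holds with `C = 1`.
-/

open scoped Real ComplexConjugate
open Complex Finset

theorem conj_eq_pow_pred_of_pow_eq_one {ω : ℂ} {n : ℕ} (h : ω ^ n = 1) (hn : n ≠ 0) :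
    conj ω = ω ^ (n - 1) := by
  have hnorm : conj ω * ω = 1 := by
    rw [conj_mul', norm_eq_one_of_pow_eq_one h hn]; simp
  calc conj ω = conj ω * ω ^ n := by rw [h, mul_one]
    _ = conj ω * ω * ω ^ (n - 1) := by
      rw [mul_assoc, ← pow_succ']; congr 2; omega
    _ = ω ^ (n - 1) := by rw [hnorm, one_mul]

theorem exp_reflection_of_add_add_eq_zero {p q s : ℂ} (h : p + q + s = 0) (a y : ℂ) :
    exp (p * -a * (1 - y)) * (exp (q * -a) - exp (s * -a))
      = exp (p * a * y) * (exp (s * a) - exp (q * a)) := by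
  simp only [mul_sub, ← exp_add]
  congr 2 <;> linear_combination (-a) * h

/-- The `r`-th summand of `φ` for `a = iσ`, and of `ψ` for `a = -iσ`. -/
noncomputable def rootTerm (ω a y : ℂ) (r : ℕ) : ℂ :=
  exp (ω ^ r * a * y) * (exp (ω ^ (r + 2) * a) - exp (ω ^ (r + 1) * a))

theorem rootTerm_add_three {ω : ℂ} (h : ω ^ 3 = 1) (a y : ℂ) (r : ℕ) :
    rootTerm ω a y (r + 3) = rootTerm ω a y r := by
  have hper : ∀ n, ω ^ (n + 3) = ω ^ n := fun n => by rw [pow_add, h, mul_one]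
  simp only [rootTerm, hper, add_right_comm _ 3]

theorem conj_rootTerm (ω a y : ℂ) (r : ℕ) :
    conj (rootTerm ω a y r) = rootTerm (conj ω) (conj a) (conj y) r := by
  simp [rootTerm, ← exp_conj]

theorem conj_rootTerm_neg_one_sub {ω : ℂ} (h : IsPrimitiveRoot ω 3) {a : ℂ} (ha : conj a = a)
    (x : ℝ) (r : ℕ) :
    conj (rootTerm ω (-a) ((1 - x : ℝ) : ℂ) r) = rootTerm ω a x (2 * r) := by
  have h3 := h.pow_eq_one
  have hsum : 1 + ω + ω ^ 2 = 0 := by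
    simpa [sum_range_succ] using h.geom_sum_eq_zero (by norm_num)
  have hpow : ∀ n, (ω ^ 2) ^ n = ω ^ (2 * n) := fun n => (pow_mul ω 2 n).symm
  have hwrap : ω ^ (2 * r + 4) = ω ^ (2 * r + 1) := by
    rw [show 2 * r + 4 = 2 * r + 1 + 3 by ring, pow_add, h3, mul_one]
  rw [conj_rootTerm, conj_eq_pow_pred_of_pow_eq_one h3 (by norm_num), map_neg, ha]
  simp only [rootTerm, hpow, mul_add, mul_one, hwrap, ofReal_sub, ofReal_one, map_sub, map_one,
    conj_ofReal]
  exact exp_reflection_of_add_add_eq_zero (by linear_combination ω ^ (2 * r) * hsum) a x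

theorem sum_rootTerm_two_mul {ω : ℂ} (h : ω ^ 3 = 1) (a y : ℂ) :
    ∑ r ∈ range 3, rootTerm ω a y (2 * r) = ∑ r ∈ range 3, rootTerm ω a y r := by
  simp only [sum_range_succ, sum_range_zero]
  rw [show 2 * 2 = 1 + 3 from rfl, rootTerm_add_three h]
  ring

theorem stmt19_general (ω σ : ℂ) (hω : ω = Complex.exp (2 * π * Complex.I / 3))
    (hσre : σ.re = 0)
    (φ ψ : ℝ → ℂ)
    (hφ : ∀ x : ℝ, φ x = ∑ r ∈ Finset.range 3,
      Complex.exp (Complex.I * ω ^ r * σ * x) *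
        (Complex.exp (Complex.I * ω ^ (r + 2) * σ) - Complex.exp (Complex.I * ω ^ (r + 1) * σ)))
    (hψ : ∀ x : ℝ, ψ x = ∑ r ∈ Finset.range 3,
      Complex.exp (-Complex.I * ω ^ r * σ * x) *
        (Complex.exp (-Complex.I * ω ^ (r + 2) * σ) - Complex.exp (-Complex.I * ω ^ (r + 1) * σ))) :
    ∃ C : ℂ, C ≠ 0 ∧ ∀ x ∈ Set.Icc (0:ℝ) 1, (starRingEnd ℂ) (ψ (1 - x)) = C * φ x := by
  have hprim : IsPrimitiveRoot ω 3 := by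
    simpa [hω] using isPrimitiveRoot_exp 3 (by norm_num)
  have ha : conj (I * σ) = I * σ := by
    apply Complex.ext <;> simp [hσre]
  have hφ' : ∀ x : ℝ, φ x = ∑ r ∈ range 3, rootTerm ω (I * σ) x r := fun x => by
    rw [hφ]; simp only [rootTerm]; ring_nf
  have hψ' : ∀ x : ℝ, ψ x = ∑ r ∈ range 3, rootTerm ω (-(I * σ)) x r := fun x => by
    rw [hψ]; simp only [rootTerm]; ring_nf
  refine ⟨1, one_ne_zero, fun x _ => ?_⟩
  rw [hψ', hφ', one_mul, map_sum]
  simp only [conj_rootTerm_neg_one_sub hprim ha]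
  exact sum_rootTerm_two_mul hprim.pow_eq_one _ _

theorem stmt19 (ω σ : ℂ) (hω : ω = Complex.exp (2 * π * Complex.I / 3))
    (hσre : σ.re = 0) (hσim : 0 < σ.im)
    (hzero : Complex.exp (Complex.I * σ) + ω * Complex.exp (Complex.I * ω * σ)
      + ω ^ 2 * Complex.exp (Complex.I * ω ^ 2 * σ) = 0)
    (φ ψ : ℝ → ℂ)
    (hφ : ∀ x : ℝ, φ x = ∑ r ∈ Finset.range 3,
      Complex.exp (Complex.I * ω ^ r * σ * x) *
        (Complex.exp (Complex.I * ω ^ (r + 2) * σ) - Complex.exp (Complex.I * ω ^ (r + 1) * σ)))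
    (hψ : ∀ x : ℝ, ψ x = ∑ r ∈ Finset.range 3,
      Complex.exp (-Complex.I * ω ^ r * σ * x) *
        (Complex.exp (-Complex.I * ω ^ (r + 2) * σ) - Complex.exp (-Complex.I * ω ^ (r + 1) * σ))) :
    ∃ C : ℂ, C ≠ 0 ∧ ∀ x ∈ Set.Icc (0:ℝ) 1, (starRingEnd ℂ) (ψ (1 - x)) = C * φ x :=
  stmt19_general ω σ hω hσre φ ψ hφ hψ
end
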